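/- arXiv:1707.05959 — 6 statements merged into one kernel-verified Lean document; each statement's English description precedes it below -/
import Mathlib

section
/- Let S ⊂ ℝ^d be a d-simplex all of whose vertices lie in the union of the two hyperplanes {x_d = τ_0} and {x_d = τ_1} with τ_0 < τ_1. Then the function λ ↦ Vol_{d-1}(S ∩ {x_d = λ}) is, on [τ_0, τ_1], equal to a polynomial in λ of degree at most d-1; explicitly it has the form c·(τ_1-λ)^r (λ-τ_0)^s with r+s = d-1, where r+1 and s+1 are the numbers of vertices at levels τ_0 and τ_1 respectively. -/
open MeasureTheory Set

private lemma mem_convexHull_range_iff_aux {E : Type*} [AddCommGroup E] [Module ℝ E]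
    {ι : Type*} [Fintype ι] (w : ι → E) (x : E) :
    x ∈ convexHull ℝ (Set.range w) ↔
      ∃ μ : ι → ℝ, (∀ i, 0 ≤ μ i) ∧ (∑ i, μ i) = 1 ∧ (∑ i, μ i • w i) = x := by
  classical
  constructor
  · intro hx
    rw [convexHull_range_eq_exists_affineCombination] at hx
    obtain ⟨t, μ, h0, h1, hx⟩ := hx
    refine ⟨fun i => if i ∈ t then μ i else 0, fun i => ?_, ?_, ?_⟩
    · dsimp only; split
      · exact h0 _ ‹_›
      · exact le_refl _
    · rw [Finset.sum_ite_mem, Finset.univ_inter, h1]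
    · rw [← hx, Finset.affineCombination_eq_linear_combination t w μ h1]
      simp only [ite_smul, zero_smul]
      rw [Finset.sum_ite_mem, Finset.univ_inter]
  · rintro ⟨μ, h0, h1, rfl⟩
    exact mem_convexHull_of_exists_fintype μ w h0 h1 (fun i => Set.mem_range_self i) rfl

private lemma sum_smul_succ_aux {E : Type*} [AddCommGroup E] [Module ℝ E]
    (m : ℕ) (c : ℝ) (μ : Fin (m + 1) → ℝ) (u : Fin (m + 1) → E)
    (hc : (∑ i, μ i) = c) :
    (∑ i, μ i • u i) = c • u 0 + ∑ k : Fin m, μ k.succ • (u k.succ - u 0) := by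
  have hμ0 : μ 0 = c - ∑ k : Fin m, μ k.succ := by
    rw [← hc, Fin.sum_univ_succ]; ring
  rw [Fin.sum_univ_succ, hμ0]
  simp only [smul_sub, sub_smul, Finset.sum_sub_distrib, Finset.sum_smul]
  abel

set_option maxHeartbeats 2000000 in
/-- Let `S` be a `d`-simplex in `ℝ^{d-1} × ℝ ≅ ℝ^d` (here `d - 1 = r + s`),
the convex hull of `d + 1 = r + s + 2` affinely independent vertices, `r + 1`
of which lie in the hyperplane `{x_d = τ0}` and `s + 1` in `{x_d = τ1}`
(`τ0 < τ1`).  Then on `[τ0, τ1]` the slice-volume function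
`λ ↦ Vol_{d-1}(S ∩ {x_d = λ})` equals `c · (τ1 - λ)^r (λ - τ0)^s` for some
constant `c`; in particular it is a polynomial of degree at most
`r + s = d - 1`. -/
theorem simplex_slice_volume_polynomial
    (r s : ℕ) (τ0 τ1 : ℝ) (hτ : τ0 < τ1)
    (v : Fin (r + s + 2) → EuclideanSpace ℝ (Fin (r + s)) × ℝ)
    (hv : AffineIndependent ℝ v)
    (hlevels : ∀ i, (v i).2 = τ0 ∨ (v i).2 = τ1)
    (hr : {i : Fin (r + s + 2) | (v i).2 = τ0}.ncard = r + 1)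
    (hs : {i : Fin (r + s + 2) | (v i).2 = τ1}.ncard = s + 1)
    (S : Set (EuclideanSpace ℝ (Fin (r + s)) × ℝ))
    (hS : S = convexHull ℝ (Set.range v)) :
    ∃ c : ℝ, ∀ l ∈ Set.Icc τ0 τ1,
      (volume {x : EuclideanSpace ℝ (Fin (r + s)) | (x, l) ∈ S}).toReal
        = c * (τ1 - l) ^ r * (l - τ0) ^ s := by
  classical
  have hδ : (0:ℝ) < τ1 - τ0 := sub_pos.2 hτ
  have hδ' : (τ1 - τ0) ≠ 0 := ne_of_gt hδ
  -- reindex the vertices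
  have e0 : {i : Fin (r + s + 2) | (v i).2 = τ0} ≃ Fin (r + 1) :=
    Finite.equivFinOfCardEq (by rw [Nat.card_coe_set_eq]; exact hr)
  have e1 : {i : Fin (r + s + 2) | (v i).2 = τ1} ≃ Fin (s + 1) :=
    Finite.equivFinOfCardEq (by rw [Nat.card_coe_set_eq]; exact hs)
  set w : Fin (r+1) ⊕ Fin (s+1) → EuclideanSpace ℝ (Fin (r + s)) × ℝ :=
    Sum.elim (fun k => v (e0.symm k)) (fun j => v (e1.symm j)) with hwdef
  have hw0 : ∀ k, (w (Sum.inl k)).2 = τ0 := fun k => (e0.symm k).2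
  have hw1 : ∀ j, (w (Sum.inr j)).2 = τ1 := fun j => (e1.symm j).2
  have hrange : Set.range w = Set.range v := by
    apply subset_antisymm
    · rintro _ ⟨i, rfl⟩
      cases i with
      | inl k => exact ⟨_, rfl⟩
      | inr j => exact ⟨_, rfl⟩
    · rintro _ ⟨i, rfl⟩
      rcases hlevels i with h | h
      · exact ⟨Sum.inl (e0 ⟨i, h⟩), by simp [hwdef]⟩
      · exact ⟨Sum.inr (e1 ⟨i, h⟩), by simp [hwdef]⟩
  set u0 : Fin (r+1) → EuclideanSpace ℝ (Fin (r + s)) := fun k => (w (Sum.inl k)).1 with hu0def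
  set u1 : Fin (s+1) → EuclideanSpace ℝ (Fin (r + s)) := fun j => (w (Sum.inr j)).1 with hu1def
  -- direction vectors and the linear maps
  set ev : Fin (r + s) → EuclideanSpace ℝ (Fin (r + s)) :=
    fun i => Fin.addCases (fun k : Fin r => u0 k.succ - u0 0)
      (fun j : Fin s => u1 j.succ - u1 0) i with hevdef
  set dv : ℝ → Fin (r + s) → ℝ :=
    fun t i => Fin.addCases (motive := fun _ => ℝ) (fun _ => 1 - t) (fun _ => t) i with hdvdef
  set bb : Module.Basis (Fin (r + s)) ℝ (EuclideanSpace ℝ (Fin (r + s))) :=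
    PiLp.basisFun 2 ℝ (Fin (r + s)) with hbbdef
  set L : EuclideanSpace ℝ (Fin (r + s)) →ₗ[ℝ] EuclideanSpace ℝ (Fin (r + s)) :=
    bb.constr ℝ ev with hLdef
  set M : ℝ → (EuclideanSpace ℝ (Fin (r + s)) →ₗ[ℝ] EuclideanSpace ℝ (Fin (r + s))) :=
    fun t => L ∘ₗ bb.constr ℝ (fun i => dv t i • bb i) with hMdef
  have hrepr : ∀ y : EuclideanSpace ℝ (Fin (r + s)), (∑ i, y i • bb i) = y := by
    intro y
    simpa [hbbdef, PiLp.basisFun_repr] using bb.sum_repr y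
  have hMapp : ∀ t (y : EuclideanSpace ℝ (Fin (r + s))),
      M t y = ∑ i, (dv t i * y i) • ev i := by
    intro t y
    conv_lhs => rw [← hrepr y]
    rw [map_sum]
    refine Finset.sum_congr rfl fun i _ => ?_
    rw [(M t).map_smul]
    have hb : M t (bb i) = dv t i • ev i := by
      rw [hMdef]
      simp only [LinearMap.comp_apply, Module.Basis.constr_basis]
      rw [L.map_smul, hLdef, Module.Basis.constr_basis]
    rw [hb, smul_smul, mul_comm]
  have hdet : ∀ t : ℝ, LinearMap.det (M t) = LinearMap.det L * ((1 - t) ^ r * t ^ s) := by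
    intro t
    rw [hMdef]
    simp only [LinearMap.det_comp]
    congr 1
    rw [← LinearMap.det_toMatrix bb]
    have hm : LinearMap.toMatrix bb bb (bb.constr ℝ (fun i => dv t i • bb i))
        = Matrix.diagonal (dv t) := by
      ext i j
      rw [LinearMap.toMatrix_apply, Module.Basis.constr_basis, LinearEquiv.map_smul, Module.Basis.repr_self]
      simp only [Finsupp.smul_single, smul_eq_mul, mul_one, Finsupp.single_apply,
        Matrix.diagonal_apply]
      by_cases h : i = j
      · subst h; simp
      · simp [h, Ne.symm h]
    rw [hm, Matrix.det_diagonal]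
    congr 1
    rw [Fin.prod_univ_add]
    congr 1
    · rw [Finset.prod_congr rfl fun k (_ : k ∈ Finset.univ) =>
        show dv t (Fin.castAdd s k) = 1 - t from by rw [hdvdef]; exact Fin.addCases_left k]
      simp
    · rw [Finset.prod_congr rfl fun j (_ : j ∈ Finset.univ) =>
        show dv t (Fin.natAdd r j) = t from by rw [hdvdef]; exact Fin.addCases_right j]
      simp
  -- the reference polytope
  set K : Set (EuclideanSpace ℝ (Fin (r + s))) :=
    {y | (∀ i, 0 ≤ y i) ∧ (∑ k : Fin r, y (Fin.castAdd s k)) ≤ 1 ∧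
      (∑ j : Fin s, y (Fin.natAdd r j)) ≤ 1} with hKdef
  have hKvol : volume K ≠ ⊤ := by
    have hb : Bornology.IsBounded K := by
      rw [isBounded_iff_forall_norm_le]
      refine ⟨Real.sqrt (r + s), fun y hy => ?_⟩
      obtain ⟨h0, h1, h2⟩ := hy
      have hle1 : ∀ i, y i ≤ 1 := by
        intro i
        induction i using Fin.addCases with
        | left k =>
          calc y (Fin.castAdd s k)
              ≤ ∑ k' : Fin r, y (Fin.castAdd s k') :=
                Finset.single_le_sum (f := fun k' => y (Fin.castAdd s k'))
                  (fun k' _ => h0 _) (Finset.mem_univ k)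
            _ ≤ 1 := h1
        | right j =>
          calc y (Fin.natAdd r j)
              ≤ ∑ j' : Fin s, y (Fin.natAdd r j') :=
                Finset.single_le_sum (f := fun j' => y (Fin.natAdd r j'))
                  (fun j' _ => h0 _) (Finset.mem_univ j)
            _ ≤ 1 := h2
      rw [EuclideanSpace.norm_eq]
      refine Real.sqrt_le_sqrt ?_
      calc (∑ i, ‖y i‖ ^ 2) ≤ ∑ _i : Fin (r + s), (1:ℝ) := by
            refine Finset.sum_le_sum fun i _ => ?_
            have : ‖y i‖ ≤ 1 := by
              rw [Real.norm_eq_abs, abs_of_nonneg (h0 i)]; exact hle1 i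
            nlinarith [norm_nonneg (y i)]
        _ = (r + s : ℝ) := by simp
    exact hb.measure_lt_top.ne
  -- the slice identity
  have key : ∀ l ∈ Set.Icc τ0 τ1,
      {x : EuclideanSpace ℝ (Fin (r + s)) | (x, l) ∈ S} =
        (fun y => ((1 - (l - τ0)/(τ1 - τ0)) • u0 0 + ((l - τ0)/(τ1 - τ0)) • u1 0)
          + M ((l - τ0)/(τ1 - τ0)) y) '' K := by
    intro l hl
    set t : ℝ := (l - τ0)/(τ1 - τ0) with htdef
    have ht0 : 0 ≤ t := div_nonneg (by linarith [hl.1]) hδ.le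
    have ht1 : t ≤ 1 := by rw [htdef, div_le_one hδ]; linarith [hl.2]
    have ht1' : 0 ≤ 1 - t := by linarith
    have hlt : (1 - t) * τ0 + t * τ1 = l := by
      rw [htdef]; field_simp; ring
    have hmem : ∀ z : EuclideanSpace ℝ (Fin (r+s)) × ℝ, z ∈ S ↔
        ∃ μ : Fin (r+1) ⊕ Fin (s+1) → ℝ,
          (∀ i, 0 ≤ μ i) ∧ (∑ i, μ i) = 1 ∧ (∑ i, μ i • w i) = z := by
      intro z; rw [hS, ← hrange, mem_convexHull_range_iff_aux]
    ext x
    simp only [Set.mem_setOf_eq, Set.mem_image]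
    constructor
    · intro hx
      rw [hmem] at hx
      obtain ⟨μ, h0, h1, hμ⟩ := hx
      have hfst : (∑ i, μ i • (w i).1) = x := by
        have h := congrArg Prod.fst hμ
        simpa [Prod.fst_sum] using h
      have hsnd : (∑ i, μ i * (w i).2) = l := by
        have h := congrArg Prod.snd hμ
        simpa [Prod.snd_sum] using h
      have hsum2 : (∑ k : Fin (r+1), μ (Sum.inl k)) + (∑ j : Fin (s+1), μ (Sum.inr j)) = 1 := by
        rw [← Fintype.sum_sum_type]; exact h1
      have hsnd2 : (∑ k : Fin (r+1), μ (Sum.inl k)) * τ0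
          + (∑ j : Fin (s+1), μ (Sum.inr j)) * τ1 = l := by
        rw [Finset.sum_mul, Finset.sum_mul, ← hsnd, Fintype.sum_sum_type]
        congr 1
        · exact Finset.sum_congr rfl fun k _ => by rw [hw0]
        · exact Finset.sum_congr rfl fun j _ => by rw [hw1]
      have ha1 : (∑ j : Fin (s+1), μ (Sum.inr j)) = t := by
        rw [htdef, eq_div_iff hδ']
        linear_combination hsnd2 - τ0 * hsum2
      have ha0 : (∑ k : Fin (r+1), μ (Sum.inl k)) = 1 - t := by linarith
      set y : EuclideanSpace ℝ (Fin (r + s)) := WithLp.toLp 2 (fun i =>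
        Fin.addCases (motive := fun _ => ℝ)
          (fun k => if (1 - t) = 0 then 0 else μ (Sum.inl k.succ) / (1 - t))
          (fun j => if t = 0 then 0 else μ (Sum.inr j.succ) / t) i) with hydef
      have hyc : ∀ k : Fin r, y (Fin.castAdd s k)
          = if (1 - t) = 0 then 0 else μ (Sum.inl k.succ) / (1 - t) := by
        intro k; rw [hydef, WithLp.ofLp_toLp]; exact Fin.addCases_left k
      have hyn' : ∀ j : Fin s, y (Fin.natAdd r j)
          = if t = 0 then 0 else μ (Sum.inr j.succ) / t := by
        intro j; rw [hydef, WithLp.ofLp_toLp]; exact Fin.addCases_right j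
      have hzero0 : (1 - t) = 0 → ∀ k, μ (Sum.inl k) = 0 := by
        intro h k
        have hz : (∑ k : Fin (r+1), μ (Sum.inl k)) = 0 := by rw [ha0, h]
        exact (Finset.sum_eq_zero_iff_of_nonneg (fun i _ => h0 _)).1 hz k (Finset.mem_univ k)
      have hzero1 : t = 0 → ∀ j, μ (Sum.inr j) = 0 := by
        intro h j
        have hz : (∑ j : Fin (s+1), μ (Sum.inr j)) = 0 := by rw [ha1, h]
        exact (Finset.sum_eq_zero_iff_of_nonneg (fun i _ => h0 _)).1 hz j (Finset.mem_univ j)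
      have hy0 : ∀ k : Fin r, (1 - t) * y (Fin.castAdd s k) = μ (Sum.inl k.succ) := by
        intro k
        rw [hyc]
        by_cases h : (1 - t) = 0
        · simp [h, hzero0 h]
        · rw [if_neg h, mul_comm, div_mul_cancel₀ _ h]
      have hy1 : ∀ j : Fin s, t * y (Fin.natAdd r j) = μ (Sum.inr j.succ) := by
        intro j
        rw [hyn']
        by_cases h : t = 0
        · simp [h, hzero1 h]
        · rw [if_neg h, mul_comm, div_mul_cancel₀ _ h]
      have ha0' : μ (Sum.inl 0) + (∑ k : Fin r, μ (Sum.inl k.succ)) = 1 - t := by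
        rw [← Fin.sum_univ_succ (fun k : Fin (r+1) => μ (Sum.inl k))]; exact ha0
      have ha1' : μ (Sum.inr 0) + (∑ j : Fin s, μ (Sum.inr j.succ)) = t := by
        rw [← Fin.sum_univ_succ (fun j : Fin (s+1) => μ (Sum.inr j))]; exact ha1
      refine ⟨y, ⟨?_, ?_, ?_⟩, ?_⟩
      · intro i
        induction i using Fin.addCases with
        | left k =>
          rw [hyc]
          split
          · exact le_refl _
          · exact div_nonneg (h0 _) ht1'
        | right j =>
          rw [hyn']
          split
          · exact le_refl _
          · exact div_nonneg (h0 _) ht0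
      · by_cases h : (1 - t) = 0
        · rw [Finset.sum_congr rfl fun k _ => by rw [hyc, if_pos h]]
          simp
        · have hpos : 0 < 1 - t := lt_of_le_of_ne ht1' (Ne.symm h)
          rw [Finset.sum_congr rfl fun k (_ : k ∈ Finset.univ) => by rw [hyc, if_neg h],
            ← Finset.sum_div, div_le_one hpos]
          have := h0 (Sum.inl (0 : Fin (r+1)))
          linarith
      · by_cases h : t = 0
        · rw [Finset.sum_congr rfl fun j _ => by rw [hyn', if_pos h]]
          simp
        · have hpos : 0 < t := lt_of_le_of_ne ht0 (Ne.symm h)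
          rw [Finset.sum_congr rfl fun j (_ : j ∈ Finset.univ) => by rw [hyn', if_neg h],
            ← Finset.sum_div, div_le_one hpos]
          have := h0 (Sum.inr (0 : Fin (s+1)))
          linarith
      · rw [hMapp, Fin.sum_univ_add]
        have hterm0 : ∀ k : Fin r,
            (dv t (Fin.castAdd s k) * y (Fin.castAdd s k)) • ev (Fin.castAdd s k)
              = μ (Sum.inl k.succ) • (u0 k.succ - u0 0) := by
          intro k
          have hd : dv t (Fin.castAdd s k) = 1 - t := by rw [hdvdef]; exact Fin.addCases_left k
          have he : ev (Fin.castAdd s k) = u0 k.succ - u0 0 := by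
            rw [hevdef]; exact Fin.addCases_left k
          rw [hd, he, hy0 k]
        have hterm1 : ∀ j : Fin s,
            (dv t (Fin.natAdd r j) * y (Fin.natAdd r j)) • ev (Fin.natAdd r j)
              = μ (Sum.inr j.succ) • (u1 j.succ - u1 0) := by
          intro j
          have hd : dv t (Fin.natAdd r j) = t := by rw [hdvdef]; exact Fin.addCases_right j
          have he : ev (Fin.natAdd r j) = u1 j.succ - u1 0 := by
            rw [hevdef]; exact Fin.addCases_right j
          rw [hd, he, hy1 j]
        rw [Finset.sum_congr rfl fun k _ => hterm0 k, Finset.sum_congr rfl fun j _ => hterm1 j]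
        have H0 := sum_smul_succ_aux r (1 - t) (fun k => μ (Sum.inl k)) u0 ha0
        have H1 := sum_smul_succ_aux s t (fun j => μ (Sum.inr j)) u1 ha1
        rw [← hfst, Fintype.sum_sum_type]
        have hx0 : (∑ k : Fin (r+1), μ (Sum.inl k) • (w (Sum.inl k)).1)
            = (1 - t) • u0 0 + ∑ k : Fin r, μ (Sum.inl k.succ) • (u0 k.succ - u0 0) := H0
        have hx1 : (∑ j : Fin (s+1), μ (Sum.inr j) • (w (Sum.inr j)).1)
            = t • u1 0 + ∑ j : Fin s, μ (Sum.inr j.succ) • (u1 j.succ - u1 0) := H1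
        rw [hx0, hx1]
        abel
    · rintro ⟨y, ⟨hyn, hys0, hys1⟩, rfl⟩
      rw [hmem]
      set A := ∑ k : Fin r, y (Fin.castAdd s k) with hA
      set B := ∑ j : Fin s, y (Fin.natAdd r j) with hB
      have hA0 : 0 ≤ A := Finset.sum_nonneg fun k _ => hyn _
      have hB0 : 0 ≤ B := Finset.sum_nonneg fun j _ => hyn _
      set μ : Fin (r+1) ⊕ Fin (s+1) → ℝ :=
        Sum.elim
          (fun k => Fin.cases (motive := fun _ => ℝ) ((1 - t) * (1 - A))
            (fun k' => (1 - t) * y (Fin.castAdd s k')) k)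
          (fun j => Fin.cases (motive := fun _ => ℝ) (t * (1 - B))
            (fun j' => t * y (Fin.natAdd r j')) j) with hμdef
      have hμl0 : μ (Sum.inl 0) = (1 - t) * (1 - A) := rfl
      have hμls : ∀ k : Fin r, μ (Sum.inl k.succ) = (1 - t) * y (Fin.castAdd s k) := by
        intro k; rw [hμdef]; simp
      have hμr0 : μ (Sum.inr 0) = t * (1 - B) := rfl
      have hμrs : ∀ j : Fin s, μ (Sum.inr j.succ) = t * y (Fin.natAdd r j) := by
        intro j; rw [hμdef]; simp
      have hc0 : (∑ k : Fin (r+1), μ (Sum.inl k)) = 1 - t := by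
        rw [Fin.sum_univ_succ, hμl0, Finset.sum_congr rfl fun k _ => hμls k, ← Finset.mul_sum,
          ← hA]
        ring
      have hc1 : (∑ j : Fin (s+1), μ (Sum.inr j)) = t := by
        rw [Fin.sum_univ_succ, hμr0, Finset.sum_congr rfl fun j _ => hμrs j, ← Finset.mul_sum,
          ← hB]
        ring
      refine ⟨μ, ?_, ?_, ?_⟩
      · rintro (k | j)
        · induction k using Fin.cases with
          | zero => rw [hμl0]; exact mul_nonneg ht1' (by linarith)
          | succ k' => rw [hμls]; exact mul_nonneg ht1' (hyn _)
        · induction j using Fin.cases with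
          | zero => rw [hμr0]; exact mul_nonneg ht0 (by linarith)
          | succ j' => rw [hμrs]; exact mul_nonneg ht0 (hyn _)
      · rw [Fintype.sum_sum_type, hc0, hc1]; ring
      · have H0 := sum_smul_succ_aux r (1 - t) (fun k => μ (Sum.inl k)) u0 hc0
        have H1 := sum_smul_succ_aux s t (fun j => μ (Sum.inr j)) u1 hc1
        have hfst : (∑ i, μ i • (w i).1)
            = ((1 - t) • u0 0 + t • u1 0) + M t y := by
          rw [Fintype.sum_sum_type]
          have hx0 : (∑ k : Fin (r+1), μ (Sum.inl k) • (w (Sum.inl k)).1)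
              = (1 - t) • u0 0 + ∑ k : Fin r, μ (Sum.inl k.succ) • (u0 k.succ - u0 0) := H0
          have hx1 : (∑ j : Fin (s+1), μ (Sum.inr j) • (w (Sum.inr j)).1)
              = t • u1 0 + ∑ j : Fin s, μ (Sum.inr j.succ) • (u1 j.succ - u1 0) := H1
          rw [hx0, hx1, hMapp, Fin.sum_univ_add]
          have hterm0 : ∀ k : Fin r,
              (dv t (Fin.castAdd s k) * y (Fin.castAdd s k)) • ev (Fin.castAdd s k)
                = μ (Sum.inl k.succ) • (u0 k.succ - u0 0) := by
            intro k
            have hd : dv t (Fin.castAdd s k) = 1 - t := by rw [hdvdef]; exact Fin.addCases_left k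
            have he : ev (Fin.castAdd s k) = u0 k.succ - u0 0 := by
              rw [hevdef]; exact Fin.addCases_left k
            rw [hd, he, hμls k]
          have hterm1 : ∀ j : Fin s,
              (dv t (Fin.natAdd r j) * y (Fin.natAdd r j)) • ev (Fin.natAdd r j)
                = μ (Sum.inr j.succ) • (u1 j.succ - u1 0) := by
            intro j
            have hd : dv t (Fin.natAdd r j) = t := by rw [hdvdef]; exact Fin.addCases_right j
            have he : ev (Fin.natAdd r j) = u1 j.succ - u1 0 := by
              rw [hevdef]; exact Fin.addCases_right j
            rw [hd, he, hμrs j]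
          rw [Finset.sum_congr rfl fun k _ => hterm0 k, Finset.sum_congr rfl fun j _ => hterm1 j]
          abel
        have hsnd : (∑ i, μ i * (w i).2) = l := by
          rw [Fintype.sum_sum_type]
          have hx0 : (∑ k : Fin (r+1), μ (Sum.inl k) * (w (Sum.inl k)).2)
              = (1 - t) * τ0 := by
            rw [Finset.sum_congr rfl fun k _ => by rw [hw0], ← Finset.sum_mul, hc0]
          have hx1 : (∑ j : Fin (s+1), μ (Sum.inr j) * (w (Sum.inr j)).2)
              = t * τ1 := by
            rw [Finset.sum_congr rfl fun j _ => by rw [hw1], ← Finset.sum_mul, hc1]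
          rw [hx0, hx1, hlt]
        rw [Prod.ext_iff]
        constructor
        · simpa [Prod.fst_sum] using hfst
        · simpa [Prod.snd_sum] using hsnd

  -- conclusion
  refine ⟨|LinearMap.det L| * (volume K).toReal / (τ1 - τ0) ^ (r + s), fun l hl => ?_⟩
  set t : ℝ := (l - τ0)/(τ1 - τ0) with htdef
  have ht0 : 0 ≤ t := div_nonneg (by linarith [hl.1]) hδ.le
  have ht1 : t ≤ 1 := by rw [htdef, div_le_one hδ]; linarith [hl.2]
  rw [key l hl]
  rw [show (fun y => ((1 - t) • u0 0 + t • u1 0) + M t y) '' K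
      = (fun z => ((1 - t) • u0 0 + t • u1 0) + z) '' (⇑(M t) '' K) by
    rw [Set.image_image]]
  rw [Set.image_add_left, measure_preimage_add,
    Measure.addHaar_image_linearMap volume (M t) K, hdet t]
  rw [ENNReal.toReal_mul, ENNReal.toReal_ofReal (abs_nonneg _)]
  have habs : |LinearMap.det L * ((1 - t) ^ r * t ^ s)|
      = |LinearMap.det L| * ((1 - t) ^ r * t ^ s) := by
    rw [abs_mul, abs_of_nonneg (mul_nonneg (pow_nonneg (by linarith) _) (pow_nonneg ht0 _))]
  rw [habs]
  have h1t : 1 - t = (τ1 - l)/(τ1 - τ0) := by rw [htdef]; field_simp; ring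
  rw [h1t, htdef, div_pow, div_pow, pow_add]
  field_simp
end

section
/- Let P ⊂ ℝ^{d-1} be a lattice polytope with vertex set {v_1,…,v_l}, one of which is the origin, and let C ⊂ ℝ^d be the cone C = Cone((m v_i, 1), i=1..l) for a fixed integer m ≥ 1. Then every point of C ∩ {x_d = 1 + l/m} lies in (u,1) + C for some lattice point u ∈ (mP) ∩ ℤ^{d-1}. -/
open Set Pointwise

/-- `u ∈ ℝ^n` is a lattice point if all its coordinates are integers. -/
def IsLatticePoint (n : ℕ) (u : EuclideanSpace ℝ (Fin n)) : Prop :=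
  ∀ j : Fin n, ∃ z : ℤ, u j = (z : ℝ)

/-- The cone in `ℝ^n × ℝ` over `P × {1}`: all nonnegative multiples of points
`(x, 1)` with `x ∈ P`. -/
def coneOver (n : ℕ) (P : Set (EuclideanSpace ℝ (Fin n))) :
    Set (EuclideanSpace ℝ (Fin n) × ℝ) :=
  {p | ∃ t : ℝ, 0 ≤ t ∧ ∃ x ∈ P, p = (t • x, t)}

/-- Selection lemma: nonnegative integers with sum at least `m` can be
shrunk pointwise to have sum exactly `m`. -/
lemma exists_le_sum_eq {ι : Type*} (s : Finset ι) (c : ι → ℕ) (m : ℕ)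
    (h : m ≤ ∑ i ∈ s, c i) :
    ∃ k : ι → ℕ, (∀ i ∈ s, k i ≤ c i) ∧ ∑ i ∈ s, k i = m := by
  classical
  induction m with
  | zero => exact ⟨fun _ => 0, fun _ _ => Nat.zero_le _, Finset.sum_const_zero⟩
  | succ m ih =>
    obtain ⟨k, hk, hsum⟩ := ih (le_of_lt (Nat.lt_of_succ_le h))
    have hex : ∃ i ∈ s, k i < c i := by
      by_contra hcon
      push_neg at hcon
      have : ∑ i ∈ s, c i ≤ ∑ i ∈ s, k i := Finset.sum_le_sum hcon
      omega
    obtain ⟨i, his, hlt⟩ := hex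
    refine ⟨Function.update k i (k i + 1), ?_, ?_⟩
    · intro j hj
      rcases eq_or_ne j i with rfl | hne
      · rw [Function.update_self]; omega
      · rw [Function.update_of_ne hne]; exact hk j hj
    · rw [Finset.sum_update_of_mem his]
      have h2 := Finset.sum_eq_sum_sdiff_singleton_add his k
      omega

lemma IsLatticePoint.add {n : ℕ} {x y : EuclideanSpace ℝ (Fin n)}
    (hx : IsLatticePoint n x) (hy : IsLatticePoint n y) :
    IsLatticePoint n (x + y) := by
  intro j
  obtain ⟨a, ha⟩ := hx j
  obtain ⟨b, hb⟩ := hy j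
  exact ⟨a + b, by simp [ha, hb]⟩

lemma IsLatticePoint.zero {n : ℕ} : IsLatticePoint n 0 :=
  fun j => ⟨0, by simp⟩

lemma IsLatticePoint.natsmul {n : ℕ} {x : EuclideanSpace ℝ (Fin n)}
    (hx : IsLatticePoint n x) (k : ℕ) : IsLatticePoint n ((k : ℝ) • x) := by
  intro j
  obtain ⟨a, ha⟩ := hx j
  exact ⟨k * a, by simp [PiLp.smul_apply, ha, smul_eq_mul]⟩

/-- Let `P ⊂ ℝ^{d-1}` be a lattice polytope with vertices `v 0, …, v (l-1)`,
one of which is the origin, let `m ≥ 1` and let `C` be the cone over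
`(mP) × {1}` in `ℝ^d`.  Then every point of `C ∩ {x_d = 1 + l/m}` lies in
`(u,1) + C` for some lattice point `u ∈ (mP) ∩ ℤ^{d-1}`. -/
theorem cone_level_covered_by_lattice_translates
    (n l : ℕ) (hl : 1 ≤ l)
    (v : Fin l → EuclideanSpace ℝ (Fin n))
    (hvZ : ∀ i, IsLatticePoint n (v i)) (hv0 : ∃ i, v i = 0)
    (P : Set (EuclideanSpace ℝ (Fin n)))
    (hP : P = convexHull ℝ (Set.range v))
    (m : ℕ) (hm : 1 ≤ m)
    (p : EuclideanSpace ℝ (Fin n) × ℝ)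
    (hp : p ∈ coneOver n ((m : ℝ) • P))
    (hz : p.2 = 1 + (l : ℝ) / (m : ℝ)) :
    ∃ u : EuclideanSpace ℝ (Fin n), IsLatticePoint n u ∧ u ∈ (m : ℝ) • P ∧
      p ∈ (fun q => ((u, (1 : ℝ)) + q)) '' coneOver n ((m : ℝ) • P) := by
  classical
  have hm0 : (0 : ℝ) < m := by exact_mod_cast hm
  have hl0 : (0 : ℝ) < l := by exact_mod_cast hl
  obtain ⟨t, ht0, x, hxP, hpeq⟩ := hp
  obtain ⟨w, hwP, rfl⟩ := hxP
  -- the set of vertices as a Finset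
  set s : Finset (EuclideanSpace ℝ (Fin n)) := Finset.image v Finset.univ with hs
  have hrange : Set.range v = (s : Set _) := by
    simp [hs]
  have hwC : w ∈ convexHull ℝ (s : Set (EuclideanSpace ℝ (Fin n))) := by
    rw [hP, hrange] at hwP; exact hwP
  obtain ⟨a, ha0, ha1, haw⟩ := Finset.mem_convexHull'.mp hwC
  -- the height
  have ht : t = 1 + (l : ℝ) / m := by
    have := hz
    rw [hpeq] at this
    simpa using this
  -- the scaled weights
  set b : EuclideanSpace ℝ (Fin n) → ℝ := fun y => ((m : ℝ) + l) * a y with hb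
  have hb0 : ∀ y ∈ s, 0 ≤ b y := fun y hy =>
    mul_nonneg (by positivity) (ha0 y hy)
  have hbsum : ∑ y ∈ s, b y = (m : ℝ) + l := by
    rw [hb, ← Finset.mul_sum, ha1, mul_one]
  -- floors
  have hcard : s.card ≤ l := le_trans (Finset.card_image_le) (by simp)
  have hfloor : m ≤ ∑ y ∈ s, ⌊b y⌋₊ := by
    have h1 : ∑ y ∈ s, b y < ∑ y ∈ s, ((⌊b y⌋₊ : ℝ) + 1) :=
      Finset.sum_lt_sum_of_nonempty
        (by
          rcases hv0 with ⟨i, hi⟩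
          exact ⟨v i, by simp [hs]⟩)
        (fun y hy => Nat.lt_floor_add_one (b y))
    rw [Finset.sum_add_distrib, Finset.sum_const, nsmul_eq_mul, mul_one, hbsum] at h1
    have h2 : (m : ℝ) < ∑ y ∈ s, (⌊b y⌋₊ : ℝ) := by
      have : (s.card : ℝ) ≤ l := by exact_mod_cast hcard
      linarith
    rw [← Nat.cast_sum] at h2
    exact_mod_cast h2.le
  obtain ⟨k, hk, hksum⟩ := exists_le_sum_eq s (fun y => ⌊b y⌋₊) m hfloor
  have hkb : ∀ y ∈ s, (k y : ℝ) ≤ b y := by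
    intro y hy
    calc (k y : ℝ) ≤ (⌊b y⌋₊ : ℝ) := by exact_mod_cast hk y hy
      _ ≤ b y := Nat.floor_le (hb0 y hy)
  have hksumR : ∑ y ∈ s, (k y : ℝ) = (m : ℝ) := by exact_mod_cast hksum
  -- the lattice point u
  set u : EuclideanSpace ℝ (Fin n) := ∑ y ∈ s, (k y : ℝ) • y with hu
  have hulat : IsLatticePoint n u := by
    refine Finset.sum_induction _ (IsLatticePoint n)
      (fun _ _ => IsLatticePoint.add) IsLatticePoint.zero ?_
    intro y hy
    obtain ⟨i, -, rfl⟩ := Finset.mem_image.mp hy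
    exact (hvZ i).natsmul (k (v i))
  -- vertices are in the convex hull
  have hvmem : ∀ y ∈ s, y ∈ convexHull ℝ (Set.range v) := by
    intro y hy
    apply subset_convexHull
    rw [hrange]; exact_mod_cast hy
  -- u ∈ m • P
  set u' : EuclideanSpace ℝ (Fin n) := ∑ y ∈ s, ((k y : ℝ) / m) • y with hu'
  have hu'P : u' ∈ P := by
    rw [hP]
    refine Convex.sum_mem (convex_convexHull ℝ _) ?_ ?_ ?_
    · intro y hy; positivity
    · rw [← Finset.sum_div, hksumR, div_self hm0.ne']
    · exact hvmem
  have humem : u = (m : ℝ) • u' := by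
    rw [hu, hu', Finset.smul_sum]
    refine Finset.sum_congr rfl fun y hy => ?_
    rw [smul_smul, mul_div_cancel₀ _ hm0.ne']
  -- the remainder point
  set y0 : EuclideanSpace ℝ (Fin n) := ∑ y ∈ s, ((b y - k y) / l) • y with hy0
  have hy0P : y0 ∈ P := by
    rw [hP]
    refine Convex.sum_mem (convex_convexHull ℝ _) ?_ ?_ ?_
    · intro y hy
      have := hkb y hy
      have : 0 ≤ b y - k y := by linarith
      positivity
    · rw [← Finset.sum_div, Finset.sum_sub_distrib, hbsum, hksumR]
      field_simp
      ring
    · exact hvmem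
  refine ⟨u, hulat, ⟨u', hu'P, humem.symm⟩, ?_⟩
  refine ⟨(((l : ℝ) / m) • ((m : ℝ) • y0), (l : ℝ) / m), ?_, ?_⟩
  · exact ⟨(l : ℝ) / m, by positivity, (m : ℝ) • y0,
      Set.smul_mem_smul_set hy0P, rfl⟩
  · -- (u, 1) + remainder = p
    rw [hpeq, ht]
    have hcoord : u + ((l : ℝ) / m) • ((m : ℝ) • y0)
        = (1 + (l : ℝ) / m) • ((m : ℝ) • w) := by
      have h1 : ((l : ℝ) / m) • ((m : ℝ) • y0) = (l : ℝ) • y0 := by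
        rw [smul_smul, div_mul_cancel₀ _ hm0.ne']
      have h2 : (l : ℝ) • y0 = ∑ y ∈ s, (b y - (k y : ℝ)) • y := by
        rw [hy0, Finset.smul_sum]
        refine Finset.sum_congr rfl fun y hy => ?_
        rw [smul_smul, mul_div_cancel₀ _ hl0.ne']
      have h3 : (1 + (l : ℝ) / m) • ((m : ℝ) • w) = ∑ y ∈ s, b y • y := by
        rw [← haw, Finset.smul_sum, Finset.smul_sum]
        refine Finset.sum_congr rfl fun y hy => ?_
        rw [smul_smul, smul_smul, hb]
        congr 1
        field_simp
      rw [h1, h2, h3, hu, ← Finset.sum_add_distrib]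
      refine Finset.sum_congr rfl fun y hy => ?_
      rw [← add_smul]
      congr 1
      ring
    simp only [Prod.mk_add_mk, Prod.mk.injEq]
    exact ⟨hcoord, trivial⟩
end

section
/- With P, m, l and the cone C_{mP} as above, the set 𝒫 = C_{mP} \ ⋃_{u ∈ (mP)∩ℤ^{d-1}} ((u,1)+C_{mP}) satisfies 𝒫 ∩ {x_d = 1+λ} = ∅ for all λ ≥ l/m. Consequently 𝒫 ∩ {x_d ≥ 1} is contained in P_{(m+l)} × [1, 1+l/m], where P_{(m+l)} = (m+l)P. -/
open Set Pointwise

private lemma exists_le_sum_aux (m : ℕ) :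
    ∀ N : ℕ, ∀ {l : ℕ} (d : Fin l → ℕ), ∑ i, d i = N → m ≤ N →
      ∃ c : Fin l → ℕ, (∀ i, c i ≤ d i) ∧ ∑ i, c i = m := by
  intro N
  induction N with
  | zero => intro l d hd hm; exact ⟨d, fun i => le_rfl, by omega⟩
  | succ N ih =>
    intro l d hd hm
    rcases eq_or_lt_of_le hm with h | h
    · exact ⟨d, fun i => le_rfl, by omega⟩
    · have hex : ∃ i, d i ≠ 0 := by
        by_contra hc
        push_neg at hc
        simp only [hc, Finset.sum_const_zero] at hd
        omega
      obtain ⟨i, hi⟩ := hex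
      have hsum' : ∑ j, Function.update d i (d i - 1) j = N := by
        rw [Finset.sum_update_of_mem (Finset.mem_univ i)]
        rw [Finset.sdiff_singleton_eq_erase]
        have h1 : ∑ j, d j = d i + ∑ j ∈ Finset.univ.erase i, d j :=
          (Finset.add_sum_erase Finset.univ d (Finset.mem_univ i)).symm
        omega
      obtain ⟨c, hc, hcs⟩ := ih (Function.update d i (d i - 1)) hsum' (by omega)
      refine ⟨c, fun j => le_trans (hc j) ?_, hcs⟩
      by_cases hj : j = i
      · subst hj; simp only [Function.update_self]; omega
      · simp [Function.update_of_ne hj]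

private lemma exists_le_sum {l : ℕ} (d : Fin l → ℕ) (m : ℕ) (h : m ≤ ∑ i, d i) :
    ∃ c : Fin l → ℕ, (∀ i, c i ≤ d i) ∧ ∑ i, c i = m :=
  exists_le_sum_aux m (∑ i, d i) d rfl h

private lemma mem_hull_iff {l n : ℕ} (v : Fin l → EuclideanSpace ℝ (Fin n))
    (x : EuclideanSpace ℝ (Fin n)) :
    x ∈ convexHull ℝ (Set.range v) ↔
      ∃ w : Fin l → ℝ, (∀ i, 0 ≤ w i) ∧ ∑ i, w i = 1 ∧ ∑ i, w i • v i = x := by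
  constructor
  · intro hx
    rw [convexHull_range_eq_exists_affineCombination] at hx
    obtain ⟨s, w, hw0, hw1, hx⟩ := hx
    refine ⟨fun i => if i ∈ s then w i else 0, fun i => ?_, ?_, ?_⟩
    · by_cases h : i ∈ s <;> simp [h, hw0 i]
    · rw [Finset.sum_ite_mem, Finset.univ_inter, hw1]
    · rw [← hx, Finset.affineCombination_eq_linear_combination s v w hw1]
      have : ∑ i, (if i ∈ s then w i else 0) • v i
          = ∑ i, (if i ∈ s then w i • v i else 0) := by
        refine Finset.sum_congr rfl fun i _ => ?_
        by_cases h : i ∈ s <;> simp [h]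
      rw [this, Finset.sum_ite_mem, Finset.univ_inter]
  · rintro ⟨w, hw0, hw1, hx⟩
    exact mem_convexHull_of_exists_fintype w v hw0 hw1 (fun i => Set.mem_range_self i) hx

/-- Let `P ⊂ ℝ^{d-1}` be a lattice polytope with `l` vertices, one of them the
origin, `m ≥ 1`, `C = C_{mP}` the cone over `(mP) × {1}`, and
`Pc = C \ ⋃_{u ∈ (mP) ∩ ℤ^{d-1}} ((u,1) + C)`.  Then `Pc ∩ {x_d = 1 + λ} = ∅`
for all `λ ≥ l/m`; consequently every point of `Pc` with `x_d ≥ 1` lies in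
`(m+l)P × [1, 1 + l/m]`. -/
theorem residual_region_bounded
    (n l : ℕ) (hl : 1 ≤ l)
    (v : Fin l → EuclideanSpace ℝ (Fin n))
    (hvZ : ∀ i, IsLatticePoint n (v i)) (hv0 : ∃ i, v i = 0)
    (P : Set (EuclideanSpace ℝ (Fin n)))
    (hP : P = convexHull ℝ (Set.range v))
    (m : ℕ) (hm : 1 ≤ m)
    (Pc : Set (EuclideanSpace ℝ (Fin n) × ℝ))
    (hPc : Pc = coneOver n ((m : ℝ) • P) \
      {q | ∃ u : EuclideanSpace ℝ (Fin n), IsLatticePoint n u ∧ u ∈ (m : ℝ) • P ∧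
        ∃ c ∈ coneOver n ((m : ℝ) • P), q = (u, (1 : ℝ)) + c}) :
    (∀ lam : ℝ, (l : ℝ) / (m : ℝ) ≤ lam → ∀ p ∈ Pc, p.2 ≠ 1 + lam) ∧
      (∀ p ∈ Pc, 1 ≤ p.2 →
        p.1 ∈ ((m : ℝ) + (l : ℝ)) • P ∧ p.2 ≤ 1 + (l : ℝ) / (m : ℝ)) := by
  have hm0 : (0 : ℝ) < m := by exact_mod_cast hm
  have hl0 : (0 : ℝ) < l := by exact_mod_cast hl
  have hlm : (0 : ℝ) < (l : ℝ) / m := div_pos hl0 hm0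
  -- Key lemma: any point of the cone at height ≥ 1 + l/m lies in the union of translates.
  have key : ∀ t : ℝ, ∀ x ∈ (m : ℝ) • P, 1 + (l : ℝ) / m ≤ t →
      ∃ u : EuclideanSpace ℝ (Fin n), IsLatticePoint n u ∧ u ∈ (m : ℝ) • P ∧
        ∃ c ∈ coneOver n ((m : ℝ) • P),
          ((t • x, t) : EuclideanSpace ℝ (Fin n) × ℝ) = (u, (1 : ℝ)) + c := by
    intro t x hx ht
    obtain ⟨y, hy, rfl⟩ := hx
    rw [hP, mem_hull_iff] at hy
    obtain ⟨w, hw0, hw1, hwy⟩ := hy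
    set μ : Fin l → ℝ := fun i => t * m * w i with hμdef
    have ht1 : 1 < t := by nlinarith
    have ht0 : 0 < t := by linarith
    have hμ0 : ∀ i, 0 ≤ μ i := fun i => by
      have := hw0 i; positivity
    have hμsum : ∑ i, μ i = t * m := by
      rw [hμdef, ← Finset.mul_sum, hw1, mul_one]
    have htm : (m : ℝ) + l ≤ t * m := by
      have h1 : ((m : ℝ) + l) = (1 + (l : ℝ) / m) * m := by field_simp
      rw [h1]
      exact mul_le_mul_of_nonneg_right ht hm0.le
    set d : Fin l → ℕ := fun i => ⌊μ i⌋₊ with hddef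
    have hdle : ∀ i, (d i : ℝ) ≤ μ i := fun i => Nat.floor_le (hμ0 i)
    have hμlt : ∀ i, μ i < d i + 1 := fun i => Nat.lt_floor_add_one _
    have hdsum : m ≤ ∑ i, d i := by
      have hne : (Finset.univ : Finset (Fin l)).Nonempty := by
        have : 0 < l := hl
        exact ⟨⟨0, this⟩, Finset.mem_univ _⟩
      have h1 : ∑ i, μ i < ∑ i, ((d i : ℝ) + 1) :=
        Finset.sum_lt_sum_of_nonempty hne fun i _ => hμlt i
      have h2 : ∑ i, ((d i : ℝ) + 1) = (∑ i, (d i : ℝ)) + l := by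
        rw [Finset.sum_add_distrib]; simp
      have h3 : (m : ℝ) < ∑ i, (d i : ℝ) := by
        rw [hμsum, h2] at h1; linarith
      have h4 : ((m : ℕ) : ℝ) < ((∑ i, d i : ℕ) : ℝ) := by push_cast; exact h3
      exact_mod_cast h4.le
    obtain ⟨c, hc, hcsum⟩ := exists_le_sum d m hdsum
    have hcμ : ∀ i, (c i : ℝ) ≤ μ i := fun i =>
      le_trans (by exact_mod_cast hc i) (hdle i)
    have hcsumR : ∑ i, (c i : ℝ) = m := by exact_mod_cast hcsum
    set u : EuclideanSpace ℝ (Fin n) := ∑ i, (c i : ℝ) • v i with hudef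
    set t' : ℝ := t - 1 with ht'def
    have ht'0 : 0 < t' := by rw [ht'def]; linarith
    set z : EuclideanSpace ℝ (Fin n) := ∑ i, ((μ i - c i) / t') • v i with hzdef
    refine ⟨u, ?_, ?_, ⟨t' • z, t'⟩, ⟨t', ht'0.le, z, ?_, rfl⟩, ?_⟩
    · -- u is a lattice point
      intro j
      refine ⟨∑ i, (c i : ℤ) * (hvZ i j).choose, ?_⟩
      have hcoord : u j = ∑ i, (c i : ℝ) * v i j := by
        calc u j = ∑ i, ((c i : ℝ) • v i) j := by
              rw [hudef]; simp
          _ = ∑ i, (c i : ℝ) * v i j :=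
              Finset.sum_congr rfl fun i _ => by simp [PiLp.smul_apply]
      rw [hcoord]
      push_cast
      exact Finset.sum_congr rfl fun i _ =>
        congrArg (fun r => (c i : ℝ) * r) (hvZ i j).choose_spec
    · -- u ∈ m • P
      refine ⟨∑ i, ((c i : ℝ) / m) • v i, ?_, ?_⟩
      · rw [hP]
        refine mem_convexHull_of_exists_fintype (fun i => (c i : ℝ) / m) v
          (fun i => by positivity) ?_ (fun i => Set.mem_range_self i) rfl
        rw [← Finset.sum_div, hcsumR, div_self hm0.ne']
      · show ((m : ℝ) • ∑ i, ((c i : ℝ) / m) • v i) = u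
        rw [hudef, Finset.smul_sum]
        exact Finset.sum_congr rfl fun i _ => by
          rw [smul_smul]; congr 1; field_simp
    · -- z ∈ m • P
      refine ⟨∑ i, ((μ i - c i) / (t' * m)) • v i, ?_, ?_⟩
      · rw [hP]
        refine mem_convexHull_of_exists_fintype (fun i => (μ i - c i) / (t' * m)) v
          (fun i => div_nonneg (by linarith [hcμ i]) (mul_pos ht'0 hm0).le) ?_ (fun i => Set.mem_range_self i) rfl
        rw [← Finset.sum_div]
        have hss : ∑ i, (μ i - (c i : ℝ)) = t' * m := by
          rw [Finset.sum_sub_distrib, hμsum, hcsumR, ht'def]; ring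
        rw [hss, div_self (mul_pos ht'0 hm0).ne']
      · show ((m : ℝ) • ∑ i, ((μ i - c i) / (t' * m)) • v i) = z
        rw [hzdef, Finset.smul_sum]
        exact Finset.sum_congr rfl fun i _ => by
          rw [smul_smul]; congr 1; field_simp
    · -- the decomposition
      have h2 : t = 1 + t' := by rw [ht'def]; ring
      have h1 : t • ((m : ℝ) • y) = u + t' • z := by
        have hty : t • ((m : ℝ) • y) = ∑ i, μ i • v i := by
          rw [← hwy, Finset.smul_sum, Finset.smul_sum]
          exact Finset.sum_congr rfl fun i _ => by
            rw [smul_smul, smul_smul, hμdef]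
        have htz : t' • z = ∑ i, (μ i - c i) • v i := by
          rw [hzdef, Finset.smul_sum]
          exact Finset.sum_congr rfl fun i _ => by
            rw [smul_smul, mul_div_cancel₀ _ ht'0.ne']
        rw [hty, htz, hudef, ← Finset.sum_add_distrib]
        exact Finset.sum_congr rfl fun i _ => by rw [← add_smul]; ring_nf
      rw [Prod.ext_iff]
      constructor
      · simpa using h1
      · simpa using h2
  constructor
  · -- first claim
    intro lam hlam p hp h2
    rw [hPc] at hp
    obtain ⟨hpC, hpN⟩ := hp
    obtain ⟨t, ht0, x, hx, rfl⟩ := hpC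
    simp only at h2
    obtain ⟨u, hu1, hu2, c, hcC, hEq⟩ := key t x hx (by rw [h2]; linarith)
    exact hpN ⟨u, hu1, hu2, c, hcC, hEq⟩
  · -- second claim
    intro p hp h1
    have h2 : p.2 ≤ 1 + (l : ℝ) / m := by
      by_contra h
      push_neg at h
      rw [hPc] at hp
      obtain ⟨hpC, hpN⟩ := hp
      obtain ⟨t, ht0, x, hx, rfl⟩ := hpC
      simp only at h
      obtain ⟨u, hu1, hu2, c, hcC, hEq⟩ := key t x hx (by linarith)
      exact hpN ⟨u, hu1, hu2, c, hcC, hEq⟩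
    refine ⟨?_, h2⟩
    rw [hPc] at hp
    obtain ⟨⟨t, ht0, x, hx, rfl⟩, -⟩ := hp
    simp only at h1 h2 ⊢
    obtain ⟨y, hy, rfl⟩ := hx
    have hml : (0 : ℝ) < (m : ℝ) + l := by linarith
    have hs0 : 0 ≤ t * m / ((m : ℝ) + l) := by positivity
    have hs1 : t * m / ((m : ℝ) + l) ≤ 1 := by
      rw [div_le_one hml]
      have ht2 : t ≤ 1 + (l : ℝ) / m := h2
      have : t * m ≤ (1 + (l : ℝ) / m) * m := mul_le_mul_of_nonneg_right ht2 hm0.le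
      have hexp : (1 + (l : ℝ) / m) * m = m + l := by field_simp
      linarith
    have h0P : (0 : EuclideanSpace ℝ (Fin n)) ∈ P := by
      obtain ⟨i, hi⟩ := hv0
      rw [hP]
      exact subset_convexHull ℝ _ ⟨i, hi⟩
    have hconv : Convex ℝ P := by rw [hP]; exact convex_convexHull ℝ _
    refine ⟨(t * m / ((m : ℝ) + l)) • y, ?_, ?_⟩
    · exact hconv.smul_mem_of_zero_mem h0P hy ⟨hs0, hs1⟩
    · show (((m : ℝ) + l) • ((t * m / ((m : ℝ) + l)) • y)) = t • ((m : ℝ) • y)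
      rw [smul_smul, smul_smul]
      congr 1
      field_simp
end

section
/- Fix a lattice polytope P ⊂ ℝ^{d-1} with l vertices containing the origin, with circumradius bound l_P, and fix r ≥ 1 such that rP contains a unit cell. For v ∈ ℤ^{d-1} let l(W_v) = {u ∈ ℤ^{d-1} : ‖u−w‖ ≤ l·r·l_P + √(d−1) for all w ∈ W_v}. Then for every integer m ≥ 1 and every λ ≥ 0, (W_v × {z=λ+1}) \ ⋃_{u∈ℤ^{d-1}}((u,1)+C_{mP}) = (W_v × {z=λ+1}) \ ⋃_{u∈l(W_v)}((u,1)+C_{mP}); moreover this set is empty for λ ≥ l·r/m. -/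
open MeasureTheory Set Pointwise

/-- The unit cell `W_v = v + [0,1]^n` at `v ∈ ℤ^n`. -/
def unitCell (n : ℕ) (v : Fin n → ℤ) : Set (EuclideanSpace ℝ (Fin n)) :=
  {x | ∀ j : Fin n, (v j : ℝ) ≤ x j ∧ x j ≤ (v j : ℝ) + 1}

/-- The point of `ℝ^n` with integer coordinates `u`. -/
def intVec (n : ℕ) (u : Fin n → ℤ) : EuclideanSpace ℝ (Fin n) :=
  WithLp.toLp 2 (fun j => (u j : ℝ))

lemma exists_weights' {n l : ℕ} (vert : Fin l → EuclideanSpace ℝ (Fin n))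
    {x : EuclideanSpace ℝ (Fin n)} (hx : x ∈ convexHull ℝ (Set.range vert)) :
    ∃ c : Fin l → ℝ, (∀ i, 0 ≤ c i) ∧ ∑ i, c i = 1 ∧ ∑ i, c i • vert i = x := by
  rw [convexHull_range_eq_exists_affineCombination] at hx
  obtain ⟨s, w, hw0, hw1, hx⟩ := hx
  refine ⟨fun i => if i ∈ s then w i else 0, fun i => ?_, ?_, ?_⟩
  · dsimp only; split_ifs with h
    exacts [hw0 i h, le_rfl]
  · rw [Finset.sum_ite_mem, Finset.univ_inter]; exact hw1
  · have h : ∀ i, (if i ∈ s then w i else 0) • vert i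
        = if i ∈ s then w i • vert i else 0 := by
      intro i; split_ifs <;> simp
    simp_rw [h]
    rw [Finset.sum_ite_mem, Finset.univ_inter,
      ← Finset.affineCombination_eq_linear_combination s vert w hw1]
    exact hx

lemma subcomb_mem' {n l : ℕ} (vert : Fin l → EuclideanSpace ℝ (Fin n))
    {P : Set (EuclideanSpace ℝ (Fin n))} (hP : P = convexHull ℝ (Set.range vert))
    (h0 : (0 : EuclideanSpace ℝ (Fin n)) ∈ P)
    (d : Fin l → ℝ) (hd0 : ∀ i, 0 ≤ d i) (hd1 : ∑ i, d i ≤ 1) :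
    ∑ i, d i • vert i ∈ P := by
  have hconv : Convex ℝ P := hP ▸ convex_convexHull ℝ _
  have hv : ∀ i, vert i ∈ P := fun i => hP ▸ subset_convexHull ℝ _ ⟨i, rfl⟩
  have h := hconv.sum_mem (t := (Finset.univ : Finset (Option (Fin l))))
    (w := fun o => Option.elim o (1 - ∑ i, d i) d)
    (z := fun o => Option.elim o 0 vert)
    (fun o _ => by cases o with
      | none => simpa using hd1
      | some i => exact hd0 i)
    (by simp [Fintype.sum_option])
    (fun o _ => by cases o with
      | none => exact h0
      | some i => exact hv i)
  simpa [Fintype.sum_option] using h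

lemma cell_dist' {n : ℕ} {v : Fin n → ℤ} {x w : EuclideanSpace ℝ (Fin n)}
    (hx : x ∈ unitCell n v) (hw : w ∈ unitCell n v) : dist x w ≤ Real.sqrt n := by
  rw [EuclideanSpace.dist_eq]
  apply Real.sqrt_le_sqrt
  calc ∑ j, dist (x j) (w j) ^ 2 ≤ ∑ _j : Fin n, (1 : ℝ) := by
        apply Finset.sum_le_sum
        intro j _
        have h1 := (hx j).1; have h2 := (hx j).2
        have h3 := (hw j).1; have h4 := (hw j).2
        have h5 : dist (x j) (w j) ≤ 1 := by
          rw [Real.dist_eq, abs_le]; constructor <;> linarith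
        nlinarith [dist_nonneg (x := x j) (y := w j)]
    _ = (n : ℝ) := by simp

/-- Fix a lattice polytope `P ⊂ ℝ^{d-1}` with `l` vertices containing the
origin, with circumradius bound `lP` (`P ⊆ B(0, lP)`), and fix `r ≥ 1` such
that `rP` contains a unit cell.  For `v ∈ ℤ^{d-1}` let
`l(W_v) = {u ∈ ℤ^{d-1} : ‖u - w‖ ≤ l·r·lP + √(d-1) for all w ∈ W_v}`.
Then for every `m ≥ 1` and `λ ≥ 0`, the part of `W_v × {z = λ+1}` not covered
by the cones `(u,1) + C_{mP}`, `u ∈ ℤ^{d-1}`, coincides with the part not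
covered by the cones with `u ∈ l(W_v)`; moreover this set is empty whenever
`λ ≥ l·r/m`. -/
theorem uncovered_cell_slice_finite_truncation
    (n l : ℕ) (hl : 1 ≤ l)
    (vert : Fin l → EuclideanSpace ℝ (Fin n))
    (hvZ : ∀ i, ∀ j : Fin n, ∃ z : ℤ, vert i j = (z : ℝ)) (hv0 : ∃ i, vert i = 0)
    (P : Set (EuclideanSpace ℝ (Fin n)))
    (hP : P = convexHull ℝ (Set.range vert))
    (lP : ℝ) (hlP : P ⊆ Metric.closedBall 0 lP)
    (r : ℕ) (hr : 1 ≤ r) (hcell : ∃ w0 : Fin n → ℤ, unitCell n w0 ⊆ (r : ℝ) • P)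
    (m : ℕ) (hm : 1 ≤ m) (v : Fin n → ℤ)
    (lset : Set (Fin n → ℤ))
    (hlset : lset = {u : Fin n → ℤ |
      ∀ w ∈ unitCell n v, dist (intVec n u) w ≤ (l : ℝ) * r * lP + Real.sqrt n}) :
    (∀ lam : ℝ, 0 ≤ lam →
      {x : EuclideanSpace ℝ (Fin n) | x ∈ unitCell n v ∧
          ¬ ∃ u : Fin n → ℤ, ∃ c ∈ coneOver n ((m : ℝ) • P),
            ((x, lam + 1) : EuclideanSpace ℝ (Fin n) × ℝ) = (intVec n u, (1 : ℝ)) + c}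
        = {x : EuclideanSpace ℝ (Fin n) | x ∈ unitCell n v ∧
          ¬ ∃ u ∈ lset, ∃ c ∈ coneOver n ((m : ℝ) • P),
            ((x, lam + 1) : EuclideanSpace ℝ (Fin n) × ℝ) = (intVec n u, (1 : ℝ)) + c}) ∧
    (∀ lam : ℝ, (l : ℝ) * r / m ≤ lam →
      {x : EuclideanSpace ℝ (Fin n) | x ∈ unitCell n v ∧
          ¬ ∃ u : Fin n → ℤ, ∃ c ∈ coneOver n ((m : ℝ) • P),
            ((x, lam + 1) : EuclideanSpace ℝ (Fin n) × ℝ) = (intVec n u, (1 : ℝ)) + c}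
        = ∅) := by
  choose z hz using hvZ
  have hl' : (1 : ℝ) ≤ l := by exact_mod_cast hl
  have hr' : (1 : ℝ) ≤ r := by exact_mod_cast hr
  have hm' : (1 : ℝ) ≤ m := by exact_mod_cast hm
  have hconvP : Convex ℝ P := hP ▸ convex_convexHull ℝ _
  have h0P : (0 : EuclideanSpace ℝ (Fin n)) ∈ P := by
    obtain ⟨i, hi⟩ := hv0
    rw [hP]; exact hi ▸ subset_convexHull ℝ _ ⟨i, rfl⟩
  have hvP : ∀ i, vert i ∈ P := fun i => hP ▸ subset_convexHull ℝ _ ⟨i, rfl⟩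
  have hnormP : ∀ p ∈ P, ‖p‖ ≤ lP := fun p hp => by
    have h := hlP hp; rwa [Metric.mem_closedBall, dist_zero_right] at h
  have hlP0 : 0 ≤ lP := le_trans (norm_nonneg _) (hnormP 0 h0P)
  have hllP : (l : ℝ) * lP ≤ (l : ℝ) * r * lP := by
    nlinarith [mul_nonneg (mul_nonneg (by linarith : (0:ℝ) ≤ (l:ℝ))
      (by linarith : (0:ℝ) ≤ (r:ℝ) - 1)) hlP0]
  -- covering condition rewritten algebraically
  have cover_iff : ∀ (lam : ℝ), 0 ≤ lam → ∀ (u : Fin n → ℤ) (x : EuclideanSpace ℝ (Fin n)),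
      (∃ c ∈ coneOver n ((m : ℝ) • P),
        ((x, lam + 1) : EuclideanSpace ℝ (Fin n) × ℝ) = (intVec n u, (1 : ℝ)) + c)
      ↔ ∃ p ∈ P, x = intVec n u + (lam * m) • p := by
    intro lam hlam u x
    constructor
    · rintro ⟨c, ⟨t, ht, y, hy, rfl⟩, heq⟩
      rw [Prod.mk_add_mk, Prod.mk.injEq] at heq
      obtain ⟨h1, h2⟩ := heq
      have ht' : t = lam := by linarith
      obtain ⟨p, hp, rfl⟩ := hy
      exact ⟨p, hp, by rw [h1, ht', smul_smul]⟩
    · rintro ⟨p, hp, hx⟩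
      refine ⟨((lam * m) • p, lam), ⟨lam, hlam, (m : ℝ) • p, Set.smul_mem_smul_set hp, ?_⟩, ?_⟩
      · rw [smul_smul]
      · rw [Prod.mk_add_mk, Prod.mk.injEq]
        exact ⟨hx, by ring⟩
  -- core: a covering cone can be chosen with apex in `lset`
  have core : ∀ (lam : ℝ), 0 ≤ lam → ∀ x ∈ unitCell n v, ∀ u : Fin n → ℤ,
      (∃ p ∈ P, x = intVec n u + (lam * m) • p) →
      ∃ u' ∈ lset, ∃ p ∈ P, x = intVec n u' + (lam * m) • p := by
    rintro lam hlam x hx u ⟨p, hp, hxe⟩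
    set s : ℝ := lam * m with hs
    have hs0 : 0 ≤ s := by positivity
    rcases le_or_gt (l : ℝ) s with hcase | hcase
    · -- far case: round the convex combination to a nearby lattice point
      obtain ⟨c, hc0, hc1, hcsum⟩ := exists_weights' vert (hP ▸ hp)
      set a : Fin l → ℝ := fun i => s * c i with ha
      set k : Fin l → ℤ := fun i => ⌊a i⌋ with hk
      set f : Fin l → ℝ := fun i => a i - k i with hf
      have hf0 : ∀ i, 0 ≤ f i := fun i => sub_nonneg.2 (Int.floor_le _)
      have hf1 : ∀ i, f i ≤ 1 := fun i => by
        have h := Int.lt_floor_add_one (a i)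
        simp only [hf]; linarith
      have hsumf_le : ∑ i, f i ≤ (l : ℝ) := by
        calc ∑ i, f i ≤ ∑ _i : Fin l, (1 : ℝ) := Finset.sum_le_sum (fun i _ => hf1 i)
          _ = l := by simp
      set u' : Fin n → ℤ := fun j => u j + ∑ i, k i * z i j with hu'
      have hiv : intVec n u' = intVec n u + ∑ i, ((k i : ℝ)) • vert i := by
        ext j
        have h1 : (∑ i, ((k i : ℝ)) • vert i) j = ∑ i, (k i : ℝ) * vert i j :=
          by simp
        show ((u' j : ℝ)) = (u j : ℝ) + (∑ i, ((k i : ℝ)) • vert i) j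
        rw [h1]
        simp only [hu', hz]
        push_cast
        ring
      have hxa : x = intVec n u + ∑ i, a i • vert i := by
        rw [hxe, ← hcsum, Finset.smul_sum]
        congr 1
        refine Finset.sum_congr rfl fun i _ => ?_
        simp only [ha]
        rw [smul_smul]
      have hxu' : x - intVec n u' = ∑ i, f i • vert i := by
        rw [hiv, hxa, add_sub_add_left_eq_sub, ← Finset.sum_sub_distrib]
        exact Finset.sum_congr rfl fun i _ => (sub_smul (a i) ((k i : ℝ)) (vert i)).symm
      have hspos : (0 : ℝ) < s := lt_of_lt_of_le (by linarith) hcase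
      set d : Fin l → ℝ := fun i => f i / s with hd
      have hd0 : ∀ i, 0 ≤ d i := fun i => div_nonneg (hf0 i) hspos.le
      have hd1 : ∑ i, d i ≤ 1 := by
        rw [← Finset.sum_div]
        exact (div_le_one hspos).2 (hsumf_le.trans hcase)
      have hpmem : ∑ i, d i • vert i ∈ P := subcomb_mem' vert hP h0P d hd0 hd1
      have hsp : s • ∑ i, d i • vert i = ∑ i, f i • vert i := by
        rw [Finset.smul_sum]
        refine Finset.sum_congr rfl fun i _ => ?_
        simp only [hd]
        rw [smul_smul]
        congr 1
        field_simp
      have hnx : dist (intVec n u') x ≤ (l : ℝ) * lP := by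
        rw [dist_eq_norm, norm_sub_rev, hxu']
        calc ‖∑ i, f i • vert i‖ ≤ ∑ i, ‖f i • vert i‖ := norm_sum_le _ _
          _ ≤ ∑ _i : Fin l, lP := Finset.sum_le_sum (fun i _ => by
              rw [norm_smul, Real.norm_eq_abs, abs_of_nonneg (hf0 i)]
              nlinarith [hnormP (vert i) (hvP i), norm_nonneg (vert i), hf1 i, hf0 i])
          _ = l * lP := by simp [mul_comm]
      refine ⟨u', ?_, ∑ i, d i • vert i, hpmem, ?_⟩
      · rw [hlset]
        intro w hw
        calc dist (intVec n u') w ≤ dist (intVec n u') x + dist x w := dist_triangle _ _ _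
          _ ≤ (l : ℝ) * lP + Real.sqrt n := add_le_add hnx (cell_dist' hx hw)
          _ ≤ (l : ℝ) * r * lP + Real.sqrt n := by linarith
      · rw [← sub_eq_iff_eq_add']
        rw [hxu', ← hsp]
    · -- near case: the original apex is already in `lset`
      refine ⟨u, ?_, p, hp, hxe⟩
      rw [hlset]
      intro w hw
      have hdx : dist (intVec n u) x ≤ s * lP := by
        rw [dist_eq_norm, norm_sub_rev]
        have h1 : x - intVec n u = s • p := by rw [hxe]; exact add_sub_cancel_left _ _
        rw [h1, norm_smul, Real.norm_eq_abs, abs_of_nonneg hs0]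
        exact mul_le_mul_of_nonneg_left (hnormP p hp) hs0
      calc dist (intVec n u) w ≤ dist (intVec n u) x + dist x w := dist_triangle _ _ _
        _ ≤ s * lP + Real.sqrt n := add_le_add hdx (cell_dist' hx hw)
        _ ≤ (l : ℝ) * r * lP + Real.sqrt n := by nlinarith
  constructor
  · -- part 1
    intro lam hlam
    ext x
    simp only [Set.mem_setOf_eq]
    constructor
    · rintro ⟨hx, hA⟩
      refine ⟨hx, ?_⟩
      rintro ⟨u, hu, c, hc, he⟩
      exact hA ⟨u, c, hc, he⟩
    · rintro ⟨hx, hB⟩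
      refine ⟨hx, ?_⟩
      rintro ⟨u, c, hc, he⟩
      have hcov := (cover_iff lam hlam u x).1 ⟨c, hc, he⟩
      obtain ⟨u', hu', hcov'⟩ := core lam hlam x hx u hcov
      exact hB ⟨u', hu', (cover_iff lam hlam u' x).2 hcov'⟩
  · -- part 2
    intro lam hlam
    have hmpos : (0 : ℝ) < m := by linarith
    have hlam0 : 0 ≤ lam := le_trans (by positivity) hlam
    have hlr : (l : ℝ) * r ≤ lam * m := by
      rw [div_le_iff₀ hmpos] at hlam; linarith
    have hsr : (r : ℝ) ≤ lam * m := by nlinarith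
    have hspos : (0 : ℝ) < lam * m := by nlinarith
    rw [Set.eq_empty_iff_forall_notMem]
    rintro x ⟨hx, hA⟩
    obtain ⟨w0, hw0⟩ := hcell
    have hy : x - intVec n v + intVec n w0 ∈ unitCell n w0 := by
      intro j
      have hcoord : (x - intVec n v + intVec n w0) j = x j - (v j : ℝ) + (w0 j : ℝ) := rfl
      rw [hcoord]
      have h1 := (hx j).1; have h2 := (hx j).2
      constructor <;> linarith
    obtain ⟨q, hq, hyq⟩ := Set.mem_smul_set.mp (hw0 hy)
    apply hA
    refine ⟨(fun j => v j - w0 j), (cover_iff lam hlam0 (fun j => v j - w0 j) x).2 ?_⟩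
    refine ⟨((r : ℝ) / (lam * m)) • q, ?_, ?_⟩
    · exact hconvP.smul_mem_of_zero_mem h0P hq
        ⟨by positivity, (div_le_one hspos).2 hsr⟩
    · have h1 : (lam * m : ℝ) • (((r : ℝ) / (lam * m)) • q) = (r : ℝ) • q := by
        rw [smul_smul, mul_div_cancel₀ _ hspos.ne']
      have h2 : intVec n (fun j => v j - w0 j) = intVec n v - intVec n w0 := by
        ext j
        show ((v j - w0 j : ℤ) : ℝ) = (v j : ℝ) - (w0 j : ℝ)
        push_cast; ring
      rw [h1, h2, hyq]
      abel
end

section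
/- The function φ_{mD}(λ) := Vol_{d-1}[(W_v × {z=λ+1}) \ ⋃_{u∈ℤ^{d-1}}((u,1)+C_{mD})] is independent of the choice of v ∈ ℤ^{d-1}, is continuous, takes values in [0,1], and satisfies φ_{mD}(λ) = φ_D(mλ) for all λ ≥ 0; consequently ∫₀^∞ φ_{mD}(λ)dλ = (1/m)∫₀^∞ φ_D(λ)dλ. -/
open MeasureTheory Set Pointwise

/-- `(x, t)` is covered by the translated cones `(u, 1) + C_P`, `u ∈ ℤ^n`. -/
def CoveredAt (n : ℕ) (P : Set (EuclideanSpace ℝ (Fin n)))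
    (x : EuclideanSpace ℝ (Fin n)) (t : ℝ) : Prop :=
  ∃ u : Fin n → ℤ, ∃ c ∈ coneOver n P,
    ((x, t) : EuclideanSpace ℝ (Fin n) × ℝ) = (intVec n u, (1 : ℝ)) + c

namespace PhiAux

lemma unitCell_def (n : ℕ) (v : Fin n → ℤ) : unitCell n v
    = {x : EuclideanSpace ℝ (Fin n) | ∀ j : Fin n, (v j : ℝ) ≤ x j ∧ x j ≤ (v j : ℝ) + 1} :=
  rfl

lemma coveredAt_iff {n : ℕ} (Q : Set (EuclideanSpace ℝ (Fin n)))
    (x : EuclideanSpace ℝ (Fin n)) (lam : ℝ) (hlam : 0 ≤ lam) :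
    CoveredAt n Q x (lam + 1) ↔ ∃ u : Fin n → ℤ, x ∈ intVec n u +ᵥ lam • Q := by
  constructor
  · rintro ⟨u, c, ⟨t, ht, y, hy, rfl⟩, heq⟩
    rw [Prod.ext_iff] at heq
    obtain ⟨h1, h2⟩ := heq
    simp only [Prod.fst_add, Prod.snd_add] at h1 h2
    have ht' : t = lam := by linarith
    subst ht'
    exact ⟨u, ⟨t • y, smul_mem_smul_set hy, by simp [h1, vadd_eq_add]⟩⟩
  · rintro ⟨u, z, ⟨y, hy, rfl⟩, hz⟩
    refine ⟨u, (lam • y, lam), ⟨lam, hlam, y, hy, rfl⟩, ?_⟩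
    rw [Prod.ext_iff]
    constructor
    · simpa using hz.symm
    · simp [add_comm]

lemma set_eq {n : ℕ} (Q : Set (EuclideanSpace ℝ (Fin n))) (v : Fin n → ℤ) (lam : ℝ)
    (hlam : 0 ≤ lam) :
    {x : EuclideanSpace ℝ (Fin n) | x ∈ unitCell n v ∧ ¬ CoveredAt n Q x (lam + 1)}
      = unitCell n v \ ⋃ u : Fin n → ℤ, (intVec n u +ᵥ lam • Q) := by
  ext x
  simp [mem_diff, coveredAt_iff Q x lam hlam, mem_iUnion]

lemma intVec_add (n : ℕ) (u v : Fin n → ℤ) :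
    intVec n (u + v) = intVec n u + intVec n v := by
  ext j; simp [intVec]

lemma intVec_sub (n : ℕ) (u v : Fin n → ℤ) :
    intVec n (u - v) = intVec n u - intVec n v := by
  ext j; simp [intVec]

lemma cell_preimage (n : ℕ) (v : Fin n → ℤ) :
    unitCell n v = (fun x => (-(intVec n v)) + x) ⁻¹' unitCell n (fun _ => 0) := by
  have hc : ∀ x : EuclideanSpace ℝ (Fin n), ∀ j : Fin n,
      ((-(intVec n v) + x) j) = -(v j : ℝ) + x j := fun x j => by simp [intVec]
  ext x
  simp only [unitCell_def, mem_preimage, mem_setOf_eq, hc x, Int.cast_zero]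
  constructor
  · intro h j
    constructor <;> linarith [(h j).1, (h j).2]
  · intro h j
    constructor <;> linarith [(h j).1, (h j).2]

lemma union_invariant (n : ℕ) (T : Set (EuclideanSpace ℝ (Fin n))) (v : Fin n → ℤ) :
    (fun x => (-(intVec n v)) + x) ⁻¹' (⋃ u : Fin n → ℤ, intVec n u +ᵥ T)
      = ⋃ u : Fin n → ℤ, intVec n u +ᵥ T := by
  ext x
  simp only [mem_preimage, mem_iUnion, Set.mem_vadd_set, vadd_eq_add]
  constructor
  · rintro ⟨u, z, hz, he⟩
    refine ⟨u + v, z, hz, ?_⟩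
    have hx : x = intVec n v + (intVec n u + z) := by
      rw [he]; abel
    rw [intVec_add, hx]; abel
  · rintro ⟨u, z, hz, he⟩
    refine ⟨u - v, z, hz, ?_⟩
    rw [intVec_sub, ← he]
    abel

lemma cell_closed (n : ℕ) (v : Fin n → ℤ) : IsClosed (unitCell n v) := by
  rw [unitCell_def]
  have : {x : EuclideanSpace ℝ (Fin n) | ∀ j : Fin n, (v j : ℝ) ≤ x j ∧ x j ≤ (v j : ℝ) + 1}
      = ⋂ j : Fin n, {x : EuclideanSpace ℝ (Fin n) | (v j : ℝ) ≤ x j ∧ x j ≤ (v j : ℝ) + 1} := by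
    ext x; simp [mem_iInter]
  rw [this]
  refine isClosed_iInter fun j => ?_
  have hcont : Continuous fun x : EuclideanSpace ℝ (Fin n) => x j :=
    (continuous_apply j).comp (PiLp.continuous_ofLp 2 fun _ : Fin n => ℝ)
  exact ((isClosed_le continuous_const hcont).inter (isClosed_le hcont continuous_const))

lemma volume_cell (n : ℕ) : volume (unitCell n (fun _ => 0)) = 1 := by
  have h := (EuclideanSpace.volume_preserving_symm_measurableEquiv_toLp (Fin n)).measure_preimage
    (s := univ.pi fun _ : Fin n => Icc (0:ℝ) 1)
    (MeasurableSet.univ_pi fun _ => measurableSet_Icc).nullMeasurableSet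
  have hset : (⇑(MeasurableEquiv.toLp 2 (Fin n → ℝ)).symm) ⁻¹' (univ.pi fun _ : Fin n => Icc (0:ℝ) 1)
      = unitCell n (fun _ => 0) := by
    ext x
    simp [unitCell_def, Pi.le_def, forall_and]
  rw [hset] at h
  rw [h, volume_pi_pi]
  simp [Real.volume_Icc]

lemma smul_compact {n : ℕ} {Q : Set (EuclideanSpace ℝ (Fin n))} (hQc : IsCompact Q) (s : ℝ) :
    IsCompact (s • Q) := by
  rw [← Set.image_smul]
  exact hQc.image (continuous_const_smul s)

lemma A_measurable (n : ℕ) (Q : Set (EuclideanSpace ℝ (Fin n))) (hQc : IsCompact Q) (s : ℝ) :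
    MeasurableSet (⋃ u : Fin n → ℤ, intVec n u +ᵥ s • Q) :=
  MeasurableSet.iUnion fun u =>
    MeasurableSet.const_vadd (smul_compact hQc s).isClosed.measurableSet _

lemma smul_mono (n : ℕ) (Q : Set (EuclideanSpace ℝ (Fin n))) (hQconv : Convex ℝ Q)
    (hQ0 : (0 : EuclideanSpace ℝ (Fin n)) ∈ Q) {s s' : ℝ} (h0 : 0 ≤ s) (h : s ≤ s') :
    s • Q ⊆ s' • Q := by
  rcases eq_or_lt_of_le (h0.trans h) with h'|h'
  · have hs : s = 0 := le_antisymm (h.trans h'.symm.le) h0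
    rw [hs, ← h']
  · rintro x ⟨y, hy, rfl⟩
    refine ⟨(s / s') • y, ?_, ?_⟩
    · have := hQconv hQ0 hy (a := 1 - s / s') (b := s / s')
        (by
          have : s / s' ≤ 1 := div_le_one_of_le₀ h h'.le
          linarith)
        (div_nonneg h0 h'.le) (by ring)
      simpa using this
    · show s' • (s / s') • y = s • y
      rw [smul_smul, mul_div_cancel₀ _ h'.ne']

lemma abs_coord_le_norm {n : ℕ} (y : EuclideanSpace ℝ (Fin n)) (j : Fin n) : |y j| ≤ ‖y‖ := by
  rw [EuclideanSpace.norm_eq, ← Real.sqrt_sq_eq_abs]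
  apply Real.sqrt_le_sqrt
  have := Finset.single_le_sum (f := fun i => ‖y i‖ ^ 2) (fun i _ => by positivity)
    (Finset.mem_univ j)
  simpa [Real.norm_eq_abs, sq_abs] using this

lemma cover_diff {n : ℕ} (Q : Set (EuclideanSpace ℝ (Fin n))) (R : ℝ)
    (hR : ∀ y ∈ Q, ‖y‖ ≤ R) (S : ℝ) {s s' : ℝ} (h0 : 0 ≤ s) (hss : s ≤ s') (hS : s' ≤ S) :
    unitCell n (fun _ => 0) ∩ (⋃ u : Fin n → ℤ, intVec n u +ᵥ s' • Q)
      ⊆ (unitCell n (fun _ => 0) ∩ (⋃ u : Fin n → ℤ, intVec n u +ᵥ s • Q))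
        ∪ ⋃ u ∈ (Fintype.piFinset fun _ : Fin n =>
            Finset.Icc (-(⌈1 + S * R⌉)) ⌈1 + S * R⌉ : Finset (Fin n → ℤ)),
          (intVec n u +ᵥ (s' • Q \ s • Q)) := by
  rintro x ⟨hxW, hxA⟩
  by_cases hxs : x ∈ ⋃ u : Fin n → ℤ, intVec n u +ᵥ s • Q
  · exact Or.inl ⟨hxW, hxs⟩
  · right
    rw [mem_iUnion] at hxA
    obtain ⟨u, q, hq, hqe⟩ := hxA
    rw [mem_iUnion₂]
    refine ⟨u, ?_, q, ⟨hq, fun hq' => hxs ?_⟩, hqe⟩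
    · rw [Fintype.mem_piFinset]
      intro j
      rw [Finset.mem_Icc]
      obtain ⟨y, hy, rfl⟩ := hq
      have hyj : |y j| ≤ R := (abs_coord_le_norm y j).trans (hR y hy)
      have hqj : |s' * y j| ≤ S * R := by
        rw [abs_mul, abs_of_nonneg (h0.trans hss)]
        exact mul_le_mul (hS.trans_eq' rfl) hyj (abs_nonneg _) (le_trans (h0.trans hss) hS)
      have hxj : (0:ℝ) ≤ x j ∧ x j ≤ 1 := by
        have := (unitCell_def n (fun _ => 0)) ▸ hxW
        simpa using this j
      have hxe : x j = (u j : ℝ) + s' * y j := by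
        rw [← hqe]; simp [intVec, vadd_eq_add]
      have h1 : (u j : ℝ) ≤ 1 + S * R := by
        have := abs_le.mp hqj
        rw [hxe] at hxj
        cases hxj; linarith
      have h2 : -(1 + S * R) ≤ (u j : ℝ) := by
        have := abs_le.mp hqj
        rw [hxe] at hxj
        cases hxj; linarith
      have hceil := Int.le_ceil (1 + S * R)
      constructor
      · have : ((-⌈1 + S * R⌉ : ℤ) : ℝ) ≤ ((u j : ℤ) : ℝ) := by push_cast; linarith
        exact_mod_cast this
      · have : ((u j : ℤ) : ℝ) ≤ ((⌈1 + S * R⌉ : ℤ) : ℝ) := by linarith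
        exact_mod_cast this
    · rw [mem_iUnion]
      exact ⟨u, q, hq', hqe⟩

end PhiAux
section Part2
open PhiAux
variable {n : ℕ} {Q : Set (EuclideanSpace ℝ (Fin n))}

lemma PhiAux.vol_inter_ne_top (s : ℝ) :
    volume (unitCell n (fun _ => 0) ∩ (⋃ u : Fin n → ℤ, intVec n u +ᵥ s • Q)) ≠ ⊤ := by
  refine ne_top_of_le_ne_top ?_ (measure_mono inter_subset_left)
  rw [volume_cell n]
  exact ENNReal.one_ne_top

lemma PhiAux.h_bound (hQc : IsCompact Q) (hQconv : Convex ℝ Q)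
    (hQ0 : (0 : EuclideanSpace ℝ (Fin n)) ∈ Q) (R : ℝ)
    (hR : ∀ y ∈ Q, ‖y‖ ≤ R) (S : ℝ) {s s' : ℝ} (h0 : 0 ≤ s) (hss : s ≤ s') (hS : s' ≤ S) :
    (volume (unitCell n (fun _ => 0) ∩ (⋃ u : Fin n → ℤ, intVec n u +ᵥ s' • Q))).toReal
      ≤ (volume (unitCell n (fun _ => 0) ∩ (⋃ u : Fin n → ℤ, intVec n u +ᵥ s • Q))).toReal
        + ((Fintype.piFinset fun _ : Fin n =>
            Finset.Icc (-(⌈1 + S * R⌉)) ⌈1 + S * R⌉ : Finset (Fin n → ℤ)).card : ℝ)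
          * ((s' ^ n - s ^ n) * (volume Q).toReal) := by
  set F : Finset (Fin n → ℤ) :=
    Fintype.piFinset fun _ : Fin n => Finset.Icc (-(⌈1 + S * R⌉)) ⌈1 + S * R⌉ with hF
  have hpow : s ^ n ≤ s' ^ n := pow_le_pow_left₀ h0 hss n
  have hQfin : volume Q ≠ ⊤ := hQc.measure_lt_top.ne
  have hdiff : volume (s' • Q \ s • Q) ≤ ENNReal.ofReal (s' ^ n - s ^ n) * volume Q := by
    rw [measure_diff (smul_mono n Q hQconv hQ0 h0 hss)
      (smul_compact hQc s).isClosed.measurableSet.nullMeasurableSet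
      (smul_compact hQc s).measure_lt_top.ne]
    rw [Measure.addHaar_smul volume s' Q, Measure.addHaar_smul volume s Q,
      finrank_euclideanSpace_fin]
    have habs : |s' ^ n| = s' ^ n := abs_of_nonneg (pow_nonneg (h0.trans hss) n)
    have habs' : |s ^ n| = s ^ n := abs_of_nonneg (pow_nonneg h0 n)
    rw [habs, habs']
    have hsplit : ENNReal.ofReal (s' ^ n) = ENNReal.ofReal (s' ^ n - s ^ n)
        + ENNReal.ofReal (s ^ n) := by
      rw [← ENNReal.ofReal_add (by linarith) (pow_nonneg h0 n)]
      ring_nf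
    rw [hsplit, add_mul]
    exact tsub_le_iff_right.mpr le_rfl
  have hsub := cover_diff Q R hR S h0 hss hS
  have key : volume (unitCell n (fun _ => 0) ∩ (⋃ u : Fin n → ℤ, intVec n u +ᵥ s' • Q))
      ≤ volume (unitCell n (fun _ => 0) ∩ (⋃ u : Fin n → ℤ, intVec n u +ᵥ s • Q))
        + (F.card : ℕ) • (ENNReal.ofReal (s' ^ n - s ^ n) * volume Q) := by
    refine le_trans (measure_mono hsub) ?_
    refine le_trans (measure_union_le _ _) ?_
    refine add_le_add le_rfl ?_
    refine le_trans (measure_biUnion_finset_le F _) ?_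
    have : ∀ u ∈ F, volume (intVec n u +ᵥ (s' • Q \ s • Q)) = volume (s' • Q \ s • Q) :=
      fun u _ => measure_vadd volume _ _
    rw [Finset.sum_congr rfl this, Finset.sum_const]
    exact nsmul_le_nsmul_right hdiff _
  have hfin1 : volume (unitCell n (fun _ => 0) ∩ (⋃ u : Fin n → ℤ, intVec n u +ᵥ s • Q)) ≠ ⊤ :=
    vol_inter_ne_top s
  have hfin2 : (F.card : ℕ) • (ENNReal.ofReal (s' ^ n - s ^ n) * volume Q) ≠ ⊤ := by
    rw [nsmul_eq_mul]
    exact ENNReal.mul_ne_top (ENNReal.natCast_ne_top _)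
      (ENNReal.mul_ne_top ENNReal.ofReal_ne_top hQfin)
  have := ENNReal.toReal_mono (a := volume (unitCell n (fun _ => 0)
      ∩ (⋃ u : Fin n → ℤ, intVec n u +ᵥ s' • Q)))
    (by exact ENNReal.add_ne_top.mpr ⟨hfin1, hfin2⟩) key
  refine le_trans this ?_
  rw [ENNReal.toReal_add hfin1 hfin2, nsmul_eq_mul, ENNReal.toReal_mul, ENNReal.toReal_mul,
    ENNReal.toReal_ofReal (by linarith : (0:ℝ) ≤ s' ^ n - s ^ n)]
  simp [mul_assoc]


lemma PhiAux.h_mono (hQc : IsCompact Q) (hQconv : Convex ℝ Q)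
    (hQ0 : (0 : EuclideanSpace ℝ (Fin n)) ∈ Q) {s s' : ℝ} (h0 : 0 ≤ s) (hss : s ≤ s') :
    (volume (unitCell n (fun _ => 0) ∩ (⋃ u : Fin n → ℤ, intVec n u +ᵥ s • Q))).toReal
      ≤ (volume (unitCell n (fun _ => 0) ∩ (⋃ u : Fin n → ℤ, intVec n u +ᵥ s' • Q))).toReal := by
  refine ENNReal.toReal_mono (vol_inter_ne_top s') (measure_mono ?_)
  refine inter_subset_inter_right _ (iUnion_mono fun u => ?_)
  exact vadd_set_mono (smul_mono n Q hQconv hQ0 h0 hss)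

lemma PhiAux.h_cont (hQc : IsCompact Q) (hQconv : Convex ℝ Q)
    (hQ0 : (0 : EuclideanSpace ℝ (Fin n)) ∈ Q) :
    ContinuousOn (fun s : ℝ =>
      (volume (unitCell n (fun _ => 0) ∩ (⋃ u : Fin n → ℤ, intVec n u +ᵥ s • Q))).toReal)
      (Ici 0) := by
  set h : ℝ → ℝ := fun s =>
    (volume (unitCell n (fun _ => 0) ∩ (⋃ u : Fin n → ℤ, intVec n u +ᵥ s • Q))).toReal with hh
  obtain ⟨R, hR⟩ : ∃ R, ∀ y ∈ Q, ‖y‖ ≤ R := by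
    obtain ⟨R, hR⟩ := hQc.isBounded.subset_closedBall 0
    exact ⟨R, fun y hy => by simpa [mem_closedBall_zero_iff] using hR hy⟩
  intro s₀ hs₀
  rw [Metric.continuousWithinAt_iff]
  intro ε hε
  set S : ℝ := s₀ + 1 with hS
  set C : ℝ := ((Fintype.piFinset fun _ : Fin n =>
      Finset.Icc (-(⌈1 + S * R⌉)) ⌈1 + S * R⌉ : Finset (Fin n → ℤ)).card : ℝ)
    * (volume Q).toReal with hC
  have hg : Continuous fun s : ℝ => C * s ^ n := by continuity
  obtain ⟨δ, hδ, hgd⟩ := Metric.continuousAt_iff.mp hg.continuousAt ε hε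
  refine ⟨min δ 1, lt_min hδ one_pos, ?_⟩
  intro s hs hd
  rw [Real.dist_eq] at hd
  have hd1 : |s - s₀| < 1 := lt_of_lt_of_le hd (min_le_right _ _)
  have hdδ : |s - s₀| < δ := lt_of_lt_of_le hd (min_le_left _ _)
  have hgb : |C * s ^ n - C * s₀ ^ n| < ε := by
    have := hgd (show dist s s₀ < δ by rwa [Real.dist_eq])
    rwa [Real.dist_eq] at this
  have key : ∀ a b : ℝ, 0 ≤ a → a ≤ b → b ≤ S → h b ≤ h a + (C * b ^ n - C * a ^ n) := by
    intro a b ha hab hbS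
    have := h_bound hQc hQconv hQ0 R hR S ha hab hbS
    rw [hh]
    refine le_trans this (le_of_eq ?_)
    rw [hC]; ring
  rw [Real.dist_eq]
  have habs := abs_le.mp hd1.le
  rcases le_total s s₀ with hle | hle
  · have hm := h_mono hQc hQconv hQ0 (mem_Ici.mp hs) hle
    have hk := key s s₀ (mem_Ici.mp hs) hle (by rw [hS]; linarith)
    have := abs_lt.mp hgb
    rw [abs_lt]
    constructor <;> [skip; skip] <;> rw [hh] at * <;> nlinarith [hm, hk]
  · have hm := h_mono hQc hQconv hQ0 (mem_Ici.mp hs₀) hle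
    have hk := key s₀ s (mem_Ici.mp hs₀) hle (by rw [hS]; linarith)
    have := abs_lt.mp hgb
    rw [abs_lt]
    constructor <;> [skip; skip] <;> rw [hh] at * <;> nlinarith [hm, hk]

end Part2

open PhiAux

/-- For a lattice polytope `P ⊂ ℝ^{d-1}` with a vertex at the origin, the
function `φ_{mD}(λ) = Vol_{d-1}[(W_v × {z = λ+1}) \ ⋃_{u∈ℤ^{d-1}}((u,1)+C_{mP})]`
is independent of the cell `v`, is continuous on `[0,∞)`, takes values in
`[0,1]`, satisfies `φ_{mD}(λ) = φ_D(mλ)`, and hence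
`∫₀^∞ φ_{mD} = (1/m) ∫₀^∞ φ_D`. -/
theorem phi_properties
    (n l : ℕ) (hl : 1 ≤ l)
    (vert : Fin l → EuclideanSpace ℝ (Fin n))
    (hvZ : ∀ i, ∀ j : Fin n, ∃ z : ℤ, vert i j = (z : ℝ)) (hv0 : ∃ i, vert i = 0)
    (P : Set (EuclideanSpace ℝ (Fin n)))
    (hP : P = convexHull ℝ (Set.range vert))
    (φ : ℕ → ℝ → ℝ)
    (hφ : ∀ m : ℕ, ∀ lam : ℝ, φ m lam =
      (volume {x : EuclideanSpace ℝ (Fin n) |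
        x ∈ unitCell n (fun _ => 0) ∧ ¬ CoveredAt n ((m : ℝ) • P) x (lam + 1)}).toReal)
    (m : ℕ) (hm : 1 ≤ m) :
    (∀ v : Fin n → ℤ, ∀ lam : ℝ, 0 ≤ lam →
      volume {x : EuclideanSpace ℝ (Fin n) |
          x ∈ unitCell n v ∧ ¬ CoveredAt n ((m : ℝ) • P) x (lam + 1)}
        = volume {x : EuclideanSpace ℝ (Fin n) |
          x ∈ unitCell n (fun _ => 0) ∧ ¬ CoveredAt n ((m : ℝ) • P) x (lam + 1)}) ∧
    ContinuousOn (φ m) (Set.Ici 0) ∧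
    (∀ lam : ℝ, 0 ≤ lam → φ m lam ∈ Set.Icc (0 : ℝ) 1) ∧
    (∀ lam : ℝ, 0 ≤ lam → φ m lam = φ 1 ((m : ℝ) * lam)) ∧
    (∫ lam in Set.Ioi (0 : ℝ), φ m lam)
      = (1 / (m : ℝ)) * ∫ lam in Set.Ioi (0 : ℝ), φ 1 lam := by
  have hPc : IsCompact P := hP ▸ (Set.finite_range vert).isCompact_convexHull ℝ
  have hPconv : Convex ℝ P := hP ▸ convex_convexHull ℝ _
  have hP0 : (0 : EuclideanSpace ℝ (Fin n)) ∈ P := by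
    obtain ⟨i, hi⟩ := hv0
    rw [hP]
    exact subset_convexHull ℝ _ ⟨i, hi⟩
  set Q : Set (EuclideanSpace ℝ (Fin n)) := (m : ℝ) • P with hQdef
  have hQc : IsCompact Q := smul_compact hPc _
  have hQconv : Convex ℝ Q := hPconv.smul _
  have hQ0 : (0 : EuclideanSpace ℝ (Fin n)) ∈ Q := ⟨0, hP0, smul_zero _⟩
  have h4 : ∀ lam : ℝ, 0 ≤ lam → φ m lam = φ 1 ((m : ℝ) * lam) := by
    intro lam hlam
    rw [hφ m lam, hφ 1 ((m : ℝ) * lam)]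
    congr 1
    have hmlam : 0 ≤ (m : ℝ) * lam := mul_nonneg (Nat.cast_nonneg m) hlam
    rw [set_eq _ _ lam hlam, set_eq _ _ ((m : ℝ) * lam) hmlam]
    have hsets : lam • Q = ((m : ℝ) * lam) • (((1 : ℕ) : ℝ) • P) := by
      rw [hQdef, smul_smul, smul_smul]
      rw [Nat.cast_one, mul_one]
      rw [mul_comm]
    rw [hsets]
  have hWA : ∀ lam : ℝ, 0 ≤ lam → φ m lam
      = 1 - (volume (unitCell n (fun _ => 0)
          ∩ (⋃ u : Fin n → ℤ, intVec n u +ᵥ lam • Q))).toReal := by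
    intro lam hlam
    rw [hφ m lam, set_eq Q _ lam hlam, ← diff_self_inter,
      measure_diff inter_subset_left
        ((cell_closed n _).measurableSet.inter (A_measurable n Q hQc lam)).nullMeasurableSet
        (vol_inter_ne_top lam),
      volume_cell n,
      ENNReal.toReal_sub_of_le
        (by rw [← volume_cell n]; exact measure_mono inter_subset_left) ENNReal.one_ne_top]
    simp
  refine ⟨?_, ?_, ?_, h4, ?_⟩
  · intro v lam hlam
    rw [set_eq Q v lam hlam, set_eq Q (fun _ => 0) lam hlam]
    have htrans : unitCell n v \ (⋃ u : Fin n → ℤ, intVec n u +ᵥ lam • Q)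
        = (fun x => (-(intVec n v)) + x) ⁻¹'
          (unitCell n (fun _ => 0) \ (⋃ u : Fin n → ℤ, intVec n u +ᵥ lam • Q)) := by
      rw [preimage_diff, ← cell_preimage, union_invariant]
    rw [htrans, measure_preimage_add]
  · exact (continuousOn_const.sub (h_cont hQc hQconv hQ0)).congr
      (fun lam hlam => hWA lam hlam)
  · intro lam hlam
    rw [hφ m lam]
    constructor
    · exact ENNReal.toReal_nonneg
    · have hle : volume {x : EuclideanSpace ℝ (Fin n) |
          x ∈ unitCell n (fun _ => 0) ∧ ¬ CoveredAt n ((m : ℝ) • P) x (lam + 1)} ≤ 1 := by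
        rw [← volume_cell n]
        exact measure_mono fun x hx => hx.1
      simpa using ENNReal.toReal_mono ENNReal.one_ne_top hle
  · have heq : EqOn (φ m) (fun lam => φ 1 ((m : ℝ) * lam)) (Ioi 0) :=
      fun lam hl => h4 lam (le_of_lt hl)
    rw [setIntegral_congr_fun measurableSet_Ioi heq]
    have hm0 : (0 : ℝ) < m := by exact_mod_cast Nat.lt_of_lt_of_le Nat.zero_lt_one hm
    rw [integral_comp_mul_left_Ioi (φ 1) 0 hm0, mul_zero, smul_eq_mul, one_div]
end

section
/- If the lattice polytope P ⊂ ℝ^{d-1} (with Vol_{d-1}(P) = α^{d-1}) is such that (1/α)P tiles ℝ^{d-1} by ℤ^{d-1}-translates, then the function φ_D satisfies φ_D(λ) = 1 − λ^{d-1}α^{d-1} for 0 ≤ λ ≤ 1/α and φ_D(λ) = 0 for λ ≥ 1/α, and hence ∫₀^∞ φ_D(λ)dλ = (1/α)·(d−1)/d. -/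
open MeasureTheory Set Pointwise

lemma intVec_neg (n : ℕ) (u : Fin n → ℤ) : intVec n (-u) = - intVec n u := by
  ext j; show ((-u j : ℤ) : ℝ) = -((u j : ℤ) : ℝ); push_cast; ring

lemma hyperplane_null (n : ℕ) (j : Fin n) (c : ℝ) :
    volume {x : EuclideanSpace ℝ (Fin n) | x j = c} = 0 := by
  have hker : volume {x : EuclideanSpace ℝ (Fin n) | x j = 0} = 0 := by
    have h : {x : EuclideanSpace ℝ (Fin n) | x j = 0} =
        ((LinearMap.ker (EuclideanSpace.projₗ (𝕜 := ℝ) j) : Submodule ℝ (EuclideanSpace ℝ (Fin n))) : Set (EuclideanSpace ℝ (Fin n))) := by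
      ext x; simp [LinearMap.mem_ker]
    rw [h]
    apply Measure.addHaar_submodule
    intro h2
    have h1 : (EuclideanSpace.single j (1:ℝ)) ∈ LinearMap.ker (EuclideanSpace.projₗ (𝕜 := ℝ) j) := by
      rw [h2]; trivial
    simp [LinearMap.mem_ker] at h1
  have h : {x : EuclideanSpace ℝ (Fin n) | x j = c} =
      (fun x => EuclideanSpace.single j c + x) '' {x : EuclideanSpace ℝ (Fin n) | x j = 0} := by
    ext x
    simp only [Set.image_add_left, Set.mem_preimage, Set.mem_setOf_eq]
    constructor
    · intro hx; simp [hx]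
    · intro hx; simp [PiLp.add_apply] at hx; linarith
  rw [h, Set.image_add_left, measure_preimage_add, hker]

lemma cell_closed (n : ℕ) (v : Fin n → ℤ) : IsClosed (unitCell n v) := by
  have h : unitCell n v = ⋂ j : Fin n,
      ((fun x : EuclideanSpace ℝ (Fin n) => x j) ⁻¹' Set.Icc ((v j : ℝ)) ((v j : ℝ) + 1)) := by
    ext x; simp [unitCell, Set.mem_Icc]
  rw [h]
  exact isClosed_iInter fun j => IsClosed.preimage
    (EuclideanSpace.proj (𝕜 := ℝ) j).continuous isClosed_Icc

lemma cell_meas (n : ℕ) (v : Fin n → ℤ) : MeasurableSet (unitCell n v) :=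
  (cell_closed n v).measurableSet

lemma volume_cell (n : ℕ) : volume (unitCell n (fun _ => 0)) = 1 := by
  have h : unitCell n (fun _ => 0) =
      ⇑(MeasurableEquiv.toLp 2 (Fin n → ℝ)).symm ⁻¹' (Set.pi Set.univ fun _ => Set.Icc (0:ℝ) 1) := by
    ext x
    simp only [unitCell, Set.mem_preimage, Set.mem_pi, Set.mem_univ, forall_true_left,
      Set.mem_Icc, Set.mem_setOf_eq, Int.cast_zero]
    norm_num
  rw [h, (EuclideanSpace.volume_preserving_symm_measurableEquiv_toLp (Fin n)).measure_preimage
    ((MeasurableSet.univ_pi fun _ => measurableSet_Icc).nullMeasurableSet)]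
  rw [volume_pi_pi]
  simp [Real.volume_Icc]

lemma mem_transCell (n : ℕ) (u : Fin n → ℤ) (x : EuclideanSpace ℝ (Fin n)) :
    x ∈ (fun y => intVec n u + y) '' unitCell n (fun _ => 0) ↔
      ∀ j, (u j : ℝ) ≤ x j ∧ x j ≤ (u j : ℝ) + 1 := by
  rw [Set.image_add_left, Set.mem_preimage]
  constructor
  · intro h j
    have h2 := h j
    simp only [unitCell, Set.mem_setOf_eq, Int.cast_zero] at h2 ⊢
    have h1 : (-intVec n u + x) j = -(u j : ℝ) + x j := by simp [intVec]
    rw [h1] at h2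
    constructor <;> linarith [h2.1, h2.2]
  · intro h j
    have h1 : (-intVec n u + x) j = -(u j : ℝ) + x j := by simp [intVec]
    simp only [unitCell, Set.mem_setOf_eq, Int.cast_zero] at *
    rw [h1]
    constructor <;> linarith [(h j).1, (h j).2]

lemma cells_cover (n : ℕ) (x : EuclideanSpace ℝ (Fin n)) :
    ∃ u : Fin n → ℤ, x ∈ (fun y => intVec n u + y) '' unitCell n (fun _ => 0) := by
  refine ⟨fun j => ⌊x j⌋, ?_⟩
  rw [mem_transCell]
  intro j
  exact ⟨Int.floor_le _, by linarith [Int.lt_floor_add_one (x j)]⟩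

lemma cells_overlap_null (n : ℕ) {u u' : Fin n → ℤ} (h : u ≠ u') :
    volume (((fun y => intVec n u + y) '' unitCell n (fun _ => 0)) ∩
      ((fun y => intVec n u' + y) '' unitCell n (fun _ => 0))) = 0 := by
  obtain ⟨j, hj⟩ := Function.ne_iff.mp h
  refine measure_mono_null ?_ (hyperplane_null n j ((max (u j) (u' j) : ℤ) : ℝ))
  intro x hx
  obtain ⟨h1, h2⟩ := hx
  rw [mem_transCell] at h1 h2
  have a1 := (h1 j).1; have a2 := (h1 j).2
  have b1 := (h2 j).1; have b2 := (h2 j).2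
  simp only [Set.mem_setOf_eq]
  rcases lt_or_gt_of_ne hj with hlt | hlt
  · have hc : (u j : ℝ) + 1 ≤ (u' j : ℝ) := by exact_mod_cast Int.add_one_le_iff.mpr hlt
    have hmax : max (u j) (u' j) = u' j := max_eq_right hlt.le
    rw [hmax]; linarith
  · have hc : (u' j : ℝ) + 1 ≤ (u j : ℝ) := by exact_mod_cast Int.add_one_le_iff.mpr hlt
    have hmax : max (u j) (u' j) = u j := max_eq_left hlt.le
    rw [hmax]; linarith

lemma volume_image_add (n : ℕ) (a : EuclideanSpace ℝ (Fin n)) (s : Set (EuclideanSpace ℝ (Fin n))) :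
    volume ((fun x => a + x) '' s) = volume s := by
  rw [Set.image_add_left]; exact measure_preimage_add _ _ _

lemma meas_image_add (n : ℕ) (a : EuclideanSpace ℝ (Fin n)) {s : Set (EuclideanSpace ℝ (Fin n))}
    (hs : MeasurableSet s) : MeasurableSet ((fun x => a + x) '' s) := by
  rw [Set.image_add_left]
  exact hs.preimage (measurable_const_add _)

lemma unfold_sum (n : ℕ) {T : Set (EuclideanSpace ℝ (Fin n))} (hT : MeasurableSet T) :
    (∑' u : Fin n → ℤ, volume (((fun y => intVec n u + y) '' unitCell n (fun _ => 0)) ∩ T))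
      = volume T := by
  rw [← measure_iUnion₀]
  · congr 1
    rw [← Set.iUnion_inter]
    rw [Set.iUnion_eq_univ_iff.mpr (fun x => cells_cover n x), Set.univ_inter]
  · intro u u' huu'
    exact measure_mono_null (Set.inter_subset_inter Set.inter_subset_left Set.inter_subset_left)
      (cells_overlap_null n huu')
  · exact fun u => ((meas_image_add n _ (cell_meas n _)).inter hT).nullMeasurableSet

lemma unfold_sum' (n : ℕ) {T : Set (EuclideanSpace ℝ (Fin n))} (hT : MeasurableSet T) :
    (∑' u : Fin n → ℤ, volume (unitCell n (fun _ => 0) ∩ ((fun y => intVec n u + y) '' T)))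
      = volume T := by
  have hterm : ∀ u : Fin n → ℤ,
      volume (unitCell n (fun _ => 0) ∩ ((fun y => intVec n u + y) '' T)) =
      volume (((fun y => intVec n (-u) + y) '' unitCell n (fun _ => 0)) ∩ T) := by
    intro u
    rw [← volume_image_add n (intVec n (-u))]
    congr 1
    rw [Set.image_inter (add_right_injective _)]
    congr 1
    rw [Set.image_image]
    have h : (fun y => intVec n (-u) + (intVec n u + y)) = fun y => y := by
      funext y; rw [intVec_neg]; abel
    rw [h, Set.image_id']
  simp_rw [hterm]
  exact ((Equiv.neg (Fin n → ℤ)).tsum_eq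
    (fun u => volume (((fun y => intVec n u + y) '' unitCell n (fun _ => 0)) ∩ T))).trans
    (unfold_sum n hT)

lemma covered_iff (n : ℕ) (P : Set (EuclideanSpace ℝ (Fin n))) (x : EuclideanSpace ℝ (Fin n))
    (lam : ℝ) : CoveredAt n P x (lam + 1) ↔
      (0 ≤ lam ∧ ∃ u : Fin n → ℤ, x ∈ (fun y => intVec n u + y) '' (lam • P)) := by
  constructor
  · rintro ⟨u, c, ⟨t, ht, y, hy, rfl⟩, heq⟩
    rw [Prod.ext_iff] at heq
    obtain ⟨h1, h2⟩ := heq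
    simp only [Prod.fst_add, Prod.snd_add] at h1 h2
    have htl : t = lam := by linarith
    subst htl
    refine ⟨ht, u, ?_⟩
    rw [Set.image_add_left, Set.mem_preimage]
    have h : -intVec n u + x = t • y := by rw [h1]; abel
    rw [h]
    exact Set.smul_mem_smul_set hy
  · rintro ⟨hlam, u, hx⟩
    rw [Set.image_add_left, Set.mem_preimage] at hx
    obtain ⟨y, hy, hxy⟩ := hx
    refine ⟨u, (lam • y, lam), ⟨lam, hlam, y, hy, rfl⟩, ?_⟩
    rw [Prod.ext_iff]
    constructor
    · show x = intVec n u + lam • y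
      simp only at hxy
      rw [hxy]; abel
    · show lam + 1 = 1 + lam
      ring

lemma smul_subset_smul (n : ℕ) {P : Set (EuclideanSpace ℝ (Fin n))} (hc : Convex ℝ P)
    (h0 : (0 : EuclideanSpace ℝ (Fin n)) ∈ P) {s t : ℝ} (hs : 0 ≤ s) (hst : s ≤ t) :
    s • P ⊆ t • P := by
  rcases eq_or_lt_of_le (hs.trans hst) with ht | ht
  · have h : s = 0 := le_antisymm (hst.trans ht.symm.le) hs
    rw [h, ← ht]
  · rintro z ⟨y, hy, rfl⟩
    refine ⟨(s / t) • y, ?_, ?_⟩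
    · have h := hc h0 hy (a := 1 - s / t) (b := s / t)
        (by rw [sub_nonneg]; exact div_le_one_of_le₀ hst ht.le)
        (div_nonneg hs ht.le) (by ring)
      simpa using h
    · show t • (s / t) • y = s • y
      rw [smul_smul, mul_div_cancel₀ _ ht.ne']

/-- If the lattice polytope `P ⊂ ℝ^{d-1}` with `Vol_{d-1}(P) = α^{d-1}` is such
that `(1/α)P` tiles `ℝ^{d-1}` by `ℤ^{d-1}`-translates, then
`φ_D(λ) = 1 - λ^{d-1} α^{d-1}` for `0 ≤ λ ≤ 1/α`, `φ_D(λ) = 0` for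
`λ ≥ 1/α`, and `∫₀^∞ φ_D = (1/α)·(d-1)/d`. -/
theorem phi_of_tiling_polytope
    (n l : ℕ) (hl : 1 ≤ l)
    (vert : Fin l → EuclideanSpace ℝ (Fin n))
    (hvZ : ∀ i, ∀ j : Fin n, ∃ z : ℤ, vert i j = (z : ℝ)) (hv0 : ∃ i, vert i = 0)
    (P : Set (EuclideanSpace ℝ (Fin n)))
    (hP : P = convexHull ℝ (Set.range vert))
    (α : ℝ) (hα : 0 < α) (hvol : volume P = ENNReal.ofReal (α ^ n))
    (hcover : (⋃ v : Fin n → ℤ, (fun x => intVec n v + x) '' (α⁻¹ • P)) = Set.univ)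
    (hoverlap : ∀ v v' : Fin n → ℤ, v ≠ v' →
      volume (((fun x => intVec n v + x) '' (α⁻¹ • P)) ∩
        ((fun x => intVec n v' + x) '' (α⁻¹ • P))) = 0)
    (φ : ℝ → ℝ)
    (hφ : ∀ lam : ℝ, φ lam = (volume {x : EuclideanSpace ℝ (Fin n) |
      x ∈ unitCell n (fun _ => 0) ∧ ¬ CoveredAt n P x (lam + 1)}).toReal) :
    (∀ lam : ℝ, 0 ≤ lam → lam ≤ 1 / α → φ lam = 1 - lam ^ n * α ^ n) ∧
    (∀ lam : ℝ, 1 / α ≤ lam → φ lam = 0) ∧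
    (∫ lam in Set.Ioi (0 : ℝ), φ lam) = (1 / α) * ((n : ℝ) / (n + 1)) := by
  have hβ : (0:ℝ) < 1/α := by positivity
  have hPc : Convex ℝ P := hP ▸ convex_convexHull ℝ _
  have h0P : (0 : EuclideanSpace ℝ (Fin n)) ∈ P := by
    obtain ⟨i, hi⟩ := hv0
    rw [hP]
    exact subset_convexHull ℝ _ ⟨i, hi⟩
  have hPcomp : IsCompact P := hP ▸ (Set.finite_range vert).isCompact_convexHull ℝ
  have hPm : MeasurableSet P := hPcomp.isClosed.measurableSet
  -- Part 1
  have key1 : ∀ lam : ℝ, 0 ≤ lam → lam ≤ 1 / α → φ lam = 1 - lam ^ n * α ^ n := by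
    intro lam h0 h1
    have hsub : lam • P ⊆ α⁻¹ • P :=
      smul_subset_smul n hPc h0P h0 (by rwa [one_div] at h1)
    have hTm : MeasurableSet (lam • P) := (hPcomp.smul lam).isClosed.measurableSet
    have hUm : MeasurableSet (⋃ u : Fin n → ℤ, (fun y => intVec n u + y) '' (lam • P)) :=
      MeasurableSet.iUnion fun u => meas_image_add n _ hTm
    have hset : {x : EuclideanSpace ℝ (Fin n) |
        x ∈ unitCell n (fun _ => 0) ∧ ¬ CoveredAt n P x (lam + 1)} =
        unitCell n (fun _ => 0) \ ⋃ u : Fin n → ℤ, (fun y => intVec n u + y) '' (lam • P) := by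
      ext x
      constructor
      · rintro ⟨hc, hnc⟩
        refine ⟨hc, fun hU => ?_⟩
        rw [Set.mem_iUnion] at hU
        obtain ⟨u, hu⟩ := hU
        exact hnc ((covered_iff n P x lam).mpr ⟨h0, u, hu⟩)
      · rintro ⟨hc, hU⟩
        refine ⟨hc, fun hcov => hU ?_⟩
        obtain ⟨_, u, hu⟩ := (covered_iff n P x lam).mp hcov
        exact Set.mem_iUnion.mpr ⟨u, hu⟩
    have hvolT : volume (lam • P) = ENNReal.ofReal (lam ^ n * α ^ n) := by
      rw [Measure.addHaar_smul volume, hvol, finrank_euclideanSpace_fin,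
        abs_of_nonneg (pow_nonneg h0 n), ← ENNReal.ofReal_mul (pow_nonneg h0 n)]
    have hvolU : volume (unitCell n (fun _ => 0) ∩
        ⋃ u : Fin n → ℤ, (fun y => intVec n u + y) '' (lam • P)) =
        ENNReal.ofReal (lam ^ n * α ^ n) := by
      rw [Set.inter_iUnion, measure_iUnion₀, unfold_sum' n hTm, hvolT]
      · intro u u' huu'
        refine measure_mono_null ?_ (hoverlap u u' huu')
        exact Set.inter_subset_inter
          (Set.inter_subset_right.trans (Set.image_mono hsub))
          (Set.inter_subset_right.trans (Set.image_mono hsub))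
      · exact fun u => ((cell_meas n _).inter (meas_image_add n _ hTm)).nullMeasurableSet
    have hfin : volume (unitCell n (fun _ => 0) ∩
        ⋃ u : Fin n → ℤ, (fun y => intVec n u + y) '' (lam • P)) ≠ ⊤ := by
      rw [hvolU]; exact ENNReal.ofReal_ne_top
    have hdiff : volume ({x : EuclideanSpace ℝ (Fin n) |
        x ∈ unitCell n (fun _ => 0) ∧ ¬ CoveredAt n P x (lam + 1)}) =
        1 - ENNReal.ofReal (lam ^ n * α ^ n) := by
      rw [hset, ← Set.diff_self_inter,
        measure_diff Set.inter_subset_left ((cell_meas n _).inter hUm).nullMeasurableSet hfin,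
        volume_cell n, hvolU]
    have hle1 : lam ^ n * α ^ n ≤ 1 := by
      rw [← mul_pow]
      calc (lam * α) ^ n ≤ 1 ^ n := by
            apply pow_le_pow_left₀ (mul_nonneg h0 hα.le)
            rw [← le_div_iff₀ hα]
            exact h1
        _ = 1 := one_pow n
    have hge0 : 0 ≤ lam ^ n * α ^ n := by positivity
    rw [hφ lam, hdiff, ← ENNReal.ofReal_one, ← ENNReal.ofReal_sub _ hge0,
      ENNReal.toReal_ofReal (by linarith)]
  -- Part 2
  have key2 : ∀ lam : ℝ, 1 / α ≤ lam → φ lam = 0 := by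
    intro lam h1
    have h0 : 0 ≤ lam := (hβ.trans_le h1).le
    have hsub : α⁻¹ • P ⊆ lam • P :=
      smul_subset_smul n hPc h0P (inv_nonneg.mpr hα.le) (by rwa [one_div] at h1)
    have hempty : {x : EuclideanSpace ℝ (Fin n) |
        x ∈ unitCell n (fun _ => 0) ∧ ¬ CoveredAt n P x (lam + 1)} = ∅ := by
      rw [Set.eq_empty_iff_forall_notMem]
      rintro x ⟨-, hnc⟩
      apply hnc
      rw [covered_iff]
      refine ⟨h0, ?_⟩
      have hx : x ∈ ⋃ v : Fin n → ℤ, (fun y => intVec n v + y) '' (α⁻¹ • P) := by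
        rw [hcover]; trivial
      rw [Set.mem_iUnion] at hx
      obtain ⟨u, hu⟩ := hx
      exact ⟨u, Set.image_mono hsub hu⟩
    rw [hφ lam, hempty]
    simp
  refine ⟨key1, key2, ?_⟩
  -- integral
  set β := 1/α with hβdef
  have hsplit : Set.Ioi (0:ℝ) = Set.Ioc 0 β ∪ Set.Ioi β := (Set.Ioc_union_Ioi_eq_Ioi hβ.le).symm
  set f : ℝ → ℝ := fun x => 1 - x ^ n * α ^ n with hfdef
  have hfc : Continuous f := by
    exact continuous_const.sub ((continuous_pow n).mul continuous_const)
  have hfint : IntegrableOn f (Set.Ioc 0 β) := hfc.integrableOn_Ioc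
  have heq1 : Set.EqOn φ f (Set.Ioc 0 β) := fun x hx => key1 x hx.1.le hx.2
  have heq2 : Set.EqOn φ (fun _ => (0:ℝ)) (Set.Ioi β) := fun x hx => key2 x (le_of_lt hx)
  have hint1 : IntegrableOn φ (Set.Ioc 0 β) :=
    hfint.congr_fun (fun x hx => (heq1 hx).symm) measurableSet_Ioc
  have hint2 : IntegrableOn φ (Set.Ioi β) :=
    (integrableOn_zero).congr_fun (fun x hx => (heq2 hx).symm) measurableSet_Ioi
  rw [hsplit, setIntegral_union (Set.Ioc_disjoint_Ioi le_rfl) measurableSet_Ioi hint1 hint2]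
  have hI2 : ∫ lam in Set.Ioi β, φ lam = 0 := by
    rw [setIntegral_congr_fun measurableSet_Ioi heq2]
    simp
  have hI1 : ∫ lam in Set.Ioc 0 β, φ lam = β - β ^ (n+1) / (n+1) * α ^ n := by
    rw [setIntegral_congr_fun measurableSet_Ioc heq1, ← intervalIntegral.integral_of_le hβ.le]
    rw [hfdef]
    rw [intervalIntegral.integral_sub intervalIntegrable_const
      ((intervalIntegral.intervalIntegrable_pow n).mul_const _)]
    rw [intervalIntegral.integral_const, intervalIntegral.integral_mul_const,
      integral_pow]
    simp [zero_pow (Nat.succ_ne_zero n)]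
  rw [hI1, hI2, add_zero]
  have hid : β ^ (n+1) * α ^ n = β := by
    rw [hβdef, pow_succ, mul_right_comm, ← mul_pow, one_div, inv_mul_cancel₀ hα.ne',
      one_pow, one_mul]
  have hn1 : (n:ℝ) + 1 ≠ 0 := by positivity
  rw [div_mul_eq_mul_div, hid]
  field_simp
  ring
end
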